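/- arXiv:1806.11527 — 9 statements merged into one kernel-verified Lean document; each statement's English description precedes it below -/
import Mathlib

section
/- Let G = (V, E) be a finite simple graph and k ≥ 1 an integer. For each u ∈ V let D_u be a two-element set such that the sets D_u are pairwise disjoint and disjoint from V; let S = ⋃_{u∈V} D_u and U = V ⊎ S. Define costs c(u) = 1 if u ∈ V and c(u) = 0 otherwise, and profits p(u,v) = 1 if u ∈ V and v ∈ D_u, and p(u,v) = 0 otherwise. Let I_C = { J ⊆ S : |J| ≤ 2k−1 } ∪ { J ⊆ S : |J| = 2k and J is not the union of k of the sets D_u } ∪ { J ⊆ S : J = ⊎_{u∈A} D_u for some A ⊆ V with |A| = k such that A is a clique in G }. Then G contains a clique on k vertices if and only if there exist disjoint sets A, C ⊆ U with C ∈ I_C whose UFLP-MC profit is at least k. -/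
/-- The independence axioms of a matroid, stated for a family of finite sets. -/
def IsIndepFamily {α : Type} [DecidableEq α] (I : Finset α → Prop) : Prop :=
  I ∅ ∧ (∀ A B : Finset α, A ⊆ B → I B → I A) ∧
    ∀ A B : Finset α, I A → I B → A.card < B.card → ∃ x ∈ B, x ∉ A ∧ I (insert x A)

/-- The UFLP-MC profit of a pair of disjoint sets `A` (facilities) and `C` (clients):
`Σ_{v∈C} max_{u∈A} p u v − Σ_{u∈A} c u`, where the maximum over an empty `A` is `0`. -/
def mcProfit {α : Type} [DecidableEq α] (p : α → α → ℕ) (c : α → ℕ)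
    (A C : Finset α) : ℤ :=
  (∑ v ∈ C, ((A.sup fun u => p u v : ℕ) : ℤ)) - ∑ u ∈ A, (c u : ℤ)

lemma sup_eq_ite {α : Type} [DecidableEq α] (V : Finset α) (D : α → Finset α)
    (p : α → α → ℕ) (hp : ∀ u v, p u v = if u ∈ V ∧ v ∈ D u then 1 else 0)
    (A : Finset α) (v : α) :
    (A.sup fun u => p u v) = if v ∈ (A ∩ V).biUnion D then 1 else 0 := by
  split_ifs with h
  · rcases Finset.mem_biUnion.mp h with ⟨u, hu, hv⟩
    rw [Finset.mem_inter] at hu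
    refine le_antisymm (Finset.sup_le fun w _ => ?_) ?_
    · rw [hp]; split_ifs <;> simp
    · have h1 : p u v ≤ A.sup fun u => p u v := Finset.le_sup (f := fun u => p u v) hu.1
      rwa [hp, if_pos ⟨hu.2, hv⟩] at h1
  · refine Nat.le_zero.mp (Finset.sup_le fun w hw => ?_)
    rw [hp]
    split_ifs with h2
    · exact absurd (Finset.mem_biUnion.mpr ⟨w, Finset.mem_inter.mpr ⟨hw, h2.1⟩, h2.2⟩) h
    · rfl

lemma profit_eq {α : Type} [DecidableEq α] (V : Finset α) (D : α → Finset α)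
    (c : α → ℕ) (hc : ∀ u, c u = if u ∈ V then 1 else 0)
    (p : α → α → ℕ) (hp : ∀ u v, p u v = if u ∈ V ∧ v ∈ D u then 1 else 0)
    (A C : Finset α) :
    mcProfit p c A C =
      ((C ∩ (A ∩ V).biUnion D).card : ℤ) - ((A ∩ V).card : ℤ) := by
  unfold mcProfit
  congr 1
  · have : ∀ v ∈ C, ((A.sup fun u => p u v : ℕ) : ℤ)
        = if v ∈ (A ∩ V).biUnion D then 1 else 0 := by
      intro v _
      rw [sup_eq_ite V D p hp]
      split_ifs <;> simp
    rw [Finset.sum_congr rfl this, Finset.sum_ite_mem, Finset.sum_const]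
    simp
  · have : ∀ u ∈ A, (c u : ℤ) = if u ∈ V then 1 else 0 := by
      intro u _; rw [hc]; split_ifs <;> simp
    rw [Finset.sum_congr rfl this, Finset.sum_ite_mem, Finset.sum_const]
    simp

theorem stmt0 {α : Type} [Fintype α] [DecidableEq α]
    (G : SimpleGraph α) (k : ℕ) (hk : 1 ≤ k)
    (V S : Finset α) (D : α → Finset α)
    (hD2 : ∀ u ∈ V, (D u).card = 2)
    (hDdisj : ∀ u ∈ V, ∀ v ∈ V, u ≠ v → Disjoint (D u) (D v))
    (hDV : ∀ u ∈ V, Disjoint (D u) V)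
    (hS : S = V.biUnion D)
    (hU : (Finset.univ : Finset α) = V ∪ S)
    (c : α → ℕ) (hc : ∀ u, c u = if u ∈ V then 1 else 0)
    (p : α → α → ℕ)
    (hp : ∀ u v, p u v = if u ∈ V ∧ v ∈ D u then 1 else 0)
    (IC : Finset α → Prop)
    (hIC : ∀ J : Finset α, IC J ↔
      (J ⊆ S ∧ J.card ≤ 2 * k - 1) ∨
      (J ⊆ S ∧ J.card = 2 * k ∧
        ¬ ∃ A : Finset α, A ⊆ V ∧ A.card = k ∧ J = A.biUnion D) ∨
      (∃ A : Finset α, A ⊆ V ∧ A.card = k ∧ J = A.biUnion D ∧ G.IsClique ↑A)) :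
    (∃ A : Finset α, A ⊆ V ∧ A.card = k ∧ G.IsClique ↑A) ↔
      (∃ A C : Finset α, Disjoint A C ∧ IC C ∧ (k : ℤ) ≤ mcProfit p c A C) := by
  classical
  have cardBi : ∀ B : Finset α, B ⊆ V → (B.biUnion D).card = 2 * B.card := by
    intro B hB
    rw [Finset.card_biUnion (fun x hx y hy hxy => hDdisj x (hB hx) y (hB hy) hxy)]
    rw [Finset.sum_congr rfl (fun x hx => hD2 x (hB hx)), Finset.sum_const,
      smul_eq_mul, mul_comm]
  constructor
  · rintro ⟨A, hAV, hAk, hclique⟩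
    refine ⟨A, A.biUnion D, ?_, ?_, ?_⟩
    · rw [Finset.disjoint_biUnion_right]
      exact fun u hu => ((hDV u (hAV hu)).symm).mono_left hAV
    · rw [hIC]; exact Or.inr (Or.inr ⟨A, hAV, hAk, rfl, hclique⟩)
    · rw [profit_eq V D c hc p hp]
      have hAI : A ∩ V = A := Finset.inter_eq_left.mpr hAV
      rw [hAI, Finset.inter_eq_left.mpr (Finset.Subset.refl _), cardBi A hAV, hAk]
      push_cast
      omega
  · rintro ⟨A, C, _, hICC, hprof⟩
    rw [profit_eq V D c hc p hp] at hprof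
    set B := A ∩ V with hB
    have hBV : B ⊆ V := Finset.inter_subset_right
    have hT : (B.biUnion D).card = 2 * B.card := cardBi B hBV
    have h1 : (C ∩ B.biUnion D).card ≤ (B.biUnion D).card :=
      Finset.card_le_card Finset.inter_subset_right
    have h2 : (C ∩ B.biUnion D).card ≤ C.card :=
      Finset.card_le_card Finset.inter_subset_left
    have hkn : k + B.card ≤ (C ∩ B.biUnion D).card := by omega
    rcases (hIC C).mp hICC with ⟨_, hcard⟩ | ⟨_, hcard, hnot⟩ | ⟨A', hA'V, hA'k, _, hcl⟩
    · omega
    · exfalso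
      apply hnot
      have hmk : B.card = k := by omega
      have hCeq : C = B.biUnion D := by
        have e1 : C ∩ B.biUnion D = C :=
          Finset.eq_of_subset_of_card_le Finset.inter_subset_left (by omega)
        have e2 : C ∩ B.biUnion D = B.biUnion D :=
          Finset.eq_of_subset_of_card_le Finset.inter_subset_right (by omega)
        rw [← e1, e2]
      exact ⟨B, hBV, hmk, hCeq⟩
    · exact ⟨A', hA'V, hA'k, hcl⟩
end

section
/- Let M = (U, I) be a matroid on a finite ground set that is representable over some field and has rank r = (α+β)·γ ≥ 1, where α, β, γ are natural numbers with γ ≥ 1. Let H ⊆ 2^U be a γ-family and let w: B(H) → ℝ be an inductive union maximizing function. Then the family S = { H_1 ⊎ … ⊎ H_α : H_1, …, H_α ∈ H pairwise disjoint and H_1 ∪ … ∪ H_α ∈ I } has a max βγ-representative Ŝ ⊆ S with respect to w of cardinality at most binom(r, αγ). -/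
section

open ExteriorAlgebra

variable {F : Type} [Field F] {V : Type} [AddCommGroup V] [Module F V]

/-- wedge product of a list of vectors -/
noncomputable def prodI (F : Type) [Field F] {V : Type} [AddCommGroup V] [Module F V]
    (l : List V) : ExteriorAlgebra F V := (l.map (ExteriorAlgebra.ι F)).prod

@[simp] lemma prodI_nil : prodI F ([] : List V) = 1 := rfl
@[simp] lemma prodI_cons (x : V) (l : List V) :
    prodI F (x :: l) = ExteriorAlgebra.ι F x * prodI F l := by
  simp [prodI]

lemma prodI_append (l₁ l₂ : List V) :
    prodI F (l₁ ++ l₂) = prodI F l₁ * prodI F l₂ := by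
  simp [prodI]

lemma prodI_perm {l₁ l₂ : List V} (h : l₁.Perm l₂) :
    prodI F l₁ = prodI F l₂ ∨ prodI F l₁ = - prodI F l₂ := by
  induction h with
  | nil => exact Or.inl rfl
  | cons x h ih =>
    rcases ih with h' | h'
    · exact Or.inl (by simp [h'])
    · exact Or.inr (by simp [h', mul_neg])
  | swap x y l =>
    refine Or.inr ?_
    simp only [prodI_cons]
    rw [← mul_assoc, ← mul_assoc]
    have : ExteriorAlgebra.ι F y * ExteriorAlgebra.ι F x
        = - (ExteriorAlgebra.ι F x * ExteriorAlgebra.ι F y) := by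
      have := ExteriorAlgebra.ι_add_mul_swap (R := F) x y
      linear_combination (norm := noncomm_ring) this
    rw [this, neg_mul]
  | trans h₁ h₂ ih₁ ih₂ =>
    rcases ih₁ with h' | h' <;> rcases ih₂ with h'' | h'' <;>
      simp [h', h'']

lemma prodI_eq_iMulti (l : List V) :
    prodI F l = ExteriorAlgebra.ιMulti F l.length (fun i => l.get i) := by
  rw [ExteriorAlgebra.ιMulti_apply, prodI]
  congr 1
  conv_lhs => rw [← List.ofFn_get l]
  rw [List.map_ofFn]
  rfl

lemma prodI_eq_zero_of_not_linearIndependent {l : List V}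
    (h : ¬ LinearIndependent F (fun i => l.get i)) : prodI F l = 0 := by
  rw [prodI_eq_iMulti]
  exact AlternatingMap.map_linearDependent _ _ h

end

section

variable {F : Type} [Field F] {V : Type} [AddCommGroup V] [Module F V]

lemma iMulti_ne_zero_of_linearIndependent {k : ℕ} {v : Fin k → V}
    (hv : LinearIndependent F v) : ExteriorAlgebra.ιMulti F k v ≠ 0 := by
  classical
  have hinj : Function.Injective v := hv.injective
  have hs : LinearIndepOn F id (Set.range v) := hv.linearIndepOn_id
  let B := Module.Basis.extend hs
  have hmem : ∀ j : Fin k, v j ∈ hs.extend (Set.subset_univ _) := fun j =>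
    hs.subset_extend _ ⟨j, rfl⟩
  let gmap : V →ₗ[F] (Fin k → F) := LinearMap.pi fun j => B.coord ⟨v j, hmem j⟩
  let A : V [⋀^Fin k]→ₗ[F] F :=
    (Matrix.detRowAlternating : (Fin k → F) [⋀^Fin k]→ₗ[F] F).compLinearMap gmap
  have hA : A v = 1 := by
    have : (fun i => gmap (v i)) = (1 : Matrix (Fin k) (Fin k) F) := by
      funext i j
      simp only [gmap, LinearMap.pi_apply, Module.Basis.coord_apply]
      have : v i = B ⟨v i, hmem i⟩ := (Module.Basis.extend_apply_self hs ⟨v i, hmem i⟩).symm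
      rw [this, Module.Basis.repr_self]
      rw [Finsupp.single_apply]
      by_cases h : i = j
      · subst h; simp [Matrix.one_apply]
      · have : (⟨v i, hmem i⟩ : hs.extend (Set.subset_univ _)) ≠ ⟨v j, hmem j⟩ := by
          simp only [ne_eq, Subtype.mk.injEq]
          exact fun hh => h (hinj hh)
        rw [if_neg (by simpa [eq_comm] using this), Matrix.one_apply, if_neg h]
    show Matrix.detRowAlternating (fun i => gmap (v i)) = 1
    rw [show (fun i => gmap (v i)) = ((1 : Matrix (Fin k) (Fin k) F)) from this]
    exact Matrix.det_one
  intro hzero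
  have := ExteriorAlgebra.liftAlternating_apply_ιMulti
    (R := F) (M := V) (N := F) (Function.update (fun i => (0 : V [⋀^Fin i]→ₗ[F] F)) k A) v
  rw [hzero, map_zero, Function.update_self, hA] at this
  exact one_ne_zero this.symm

end

section

variable {F : Type} [Field F] {V : Type} [AddCommGroup V] [Module F V]

noncomputable def gensFun {d : ℕ} (F : Type) [Field F] {V : Type} [AddCommGroup V] [Module F V]
    (b : Module.Basis (Fin d) F V) (k : ℕ) : {s : Finset (Fin d) // s.card = k} → ExteriorAlgebra F V :=
  fun s => prodI F ((s.1.sort (· ≤ ·)).map b)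

lemma prodI_mem_span {d : ℕ} (b : Module.Basis (Fin d) F V) :
    ∀ l : List V, prodI F l ∈ Submodule.span F (Set.range (gensFun F b l.length)) := by
  intro l
  induction l with
  | nil =>
    apply Submodule.subset_span
    exact ⟨⟨∅, by simp⟩, by simp [gensFun]⟩
  | cons x t ih =>
    have key : ∀ i : Fin d, ExteriorAlgebra.ι F (b i) * prodI F t ∈
        Submodule.span F (Set.range (gensFun F b (t.length + 1))) := by
      intro i
      have hmap : ExteriorAlgebra.ι F (b i) * prodI F t ∈
          Submodule.map (LinearMap.mulLeft F (ExteriorAlgebra.ι F (b i)))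
            (Submodule.span F (Set.range (gensFun F b t.length))) :=
        ⟨prodI F t, ih, rfl⟩
      rw [Submodule.map_span] at hmap
      refine Submodule.span_le.mpr ?_ hmap
      rintro _ ⟨_, ⟨⟨s, hs⟩, rfl⟩, rfl⟩
      simp only [LinearMap.mulLeft_apply, gensFun]
      by_cases hi : i ∈ s
      · -- repeated vector: product is zero
        have : ExteriorAlgebra.ι F (b i) * prodI F ((s.sort (· ≤ ·)).map b) = 0 := by
          rw [← prodI_cons]
          apply prodI_eq_zero_of_not_linearIndependent
          intro hLI
          set L := b i :: (s.sort (· ≤ ·)).map b with hL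
          obtain ⟨j, hj⟩ := List.get_of_mem ((Finset.mem_sort (α := Fin d) (· ≤ ·)).mpr hi)
          have hb : j.1 + 1 < L.length := by
            have := j.isLt
            simp only [hL, List.length_cons, List.length_map]
            omega
          have hj1 : (⟨j.1 + 1, hb⟩ : Fin L.length) ≠ ⟨0, by simp [hL]⟩ := by
            simp [Fin.ext_iff]
          apply hj1
          apply hLI.injective
          show L.get ⟨j.1 + 1, hb⟩ = L.get ⟨0, _⟩
          have h2 : L.get ⟨j.1 + 1, hb⟩ = b ((s.sort (· ≤ ·)).get j) := by
            simp [hL]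
          rw [h2, hj]
          rfl
        rw [this]; exact Submodule.zero_mem _
      · -- fresh index: equal up to sign to a generator
        have hperm : (i :: s.sort (· ≤ ·)).Perm ((insert i s).sort (· ≤ ·)) := by
          refine List.Perm.trans (List.Perm.cons i (Finset.sort_perm_toList s _)) ?_
          refine List.Perm.trans (Finset.toList_insert hi).symm ?_
          exact (Finset.sort_perm_toList _ _).symm
        have hperm2 : ((i :: s.sort (· ≤ ·)).map b).Perm (((insert i s).sort (· ≤ ·)).map b) :=
          hperm.map b
        have hcard : (insert i s).card = t.length + 1 := by
          rw [Finset.card_insert_of_notMem hi, hs]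
        have hgen : gensFun F b (t.length + 1) ⟨insert i s, hcard⟩ ∈
            Submodule.span F (Set.range (gensFun F b (t.length + 1))) :=
          Submodule.subset_span ⟨_, rfl⟩
        have heq : ExteriorAlgebra.ι F (b i) * prodI F ((s.sort (· ≤ ·)).map b)
            = prodI F ((i :: s.sort (· ≤ ·)).map b) := by simp
        rw [heq]
        rcases prodI_perm (F := F) hperm2 with h' | h'
        · rw [h']; exact hgen
        · rw [h']; exact Submodule.neg_mem _ hgen
    have hx : ExteriorAlgebra.ι F x = ∑ i, (b.repr x) i • ExteriorAlgebra.ι F (b i) := by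
      conv_lhs => rw [← Module.Basis.sum_repr b x]
      rw [map_sum]
      simp
    rw [prodI_cons, hx, Finset.sum_mul]
    refine Submodule.sum_mem _ fun i _ => ?_
    rw [smul_mul_assoc]
    exact Submodule.smul_mem _ _ (key i)

end

section

variable {F : Type} [Field F] {σ M : Type} [AddCommGroup M] [Module F M]

lemma greedy_select [DecidableEq σ] (F : Type) [Field F] [Module F M] (v : σ → M) (w : σ → ℝ)
    (C : Finset σ) :
    ∃ C' : Finset σ, C' ⊆ C ∧ Set.InjOn v ↑C' ∧
      LinearIndependent F ((↑) : (v '' ↑C') → M) ∧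
      ∀ X ∈ C, v X ∈ Submodule.span F (v '' {X' | X' ∈ C' ∧ w X ≤ w X'}) := by
  classical
  induction C using Finset.strongInductionOn with
  | _ C ih =>
  rcases C.eq_empty_or_nonempty with rfl | hne
  · refine ⟨∅, Finset.Subset.refl _, by simp, ?_, by simp⟩
    rw [Finset.coe_empty, Set.image_empty]
    exact linearIndependent_empty F M
  obtain ⟨X₀, hX₀, hmin⟩ := Finset.exists_min_image C w hne
  obtain ⟨C', hsub, hinj, hli, hspan⟩ := ih (C.erase X₀) (Finset.erase_ssubset hX₀)
  by_cases hcase : v X₀ ∈ Submodule.span F (v '' ↑C')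
  · refine ⟨C', hsub.trans (Finset.erase_subset _ _), hinj, hli, ?_⟩
    intro X hX
    by_cases hXX : X = X₀
    · subst hXX
      have hset : {X' | X' ∈ C' ∧ w X ≤ w X'} = (↑C' : Set σ) := by
        ext X'
        simp only [Set.mem_setOf_eq, Finset.mem_coe, and_iff_left_iff_imp]
        intro hX'
        exact hmin X' (Finset.mem_of_mem_erase (hsub hX'))
      rw [hset]; exact hcase
    · exact hspan X (Finset.mem_erase.mpr ⟨hXX, hX⟩)
  · have hX₀C' : X₀ ∉ C' := fun h => (Finset.notMem_erase X₀ C) (hsub h)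
    have hnotim : v X₀ ∉ v '' ↑C' := fun h => hcase (Submodule.subset_span h)
    refine ⟨insert X₀ C', Finset.insert_subset hX₀ (hsub.trans (Finset.erase_subset _ _)), ?_, ?_, ?_⟩
    · rw [Finset.coe_insert]
      intro x hx y hy hxy
      rcases hx with rfl | hx <;> rcases hy with rfl | hy
      · rfl
      · exact absurd ⟨y, hy, hxy.symm⟩ hnotim
      · exact absurd ⟨x, hx, hxy⟩ hnotim
      · exact hinj hx hy hxy
    · rw [Finset.coe_insert, Set.image_insert_eq]
      exact LinearIndepOn.id_insert hli hcase
    · intro X hX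
      by_cases hXX : X = X₀
      · subst hXX
        exact Submodule.subset_span ⟨X, ⟨Finset.mem_insert_self _ _, le_refl _⟩, rfl⟩
      · refine Submodule.span_mono (Set.image_mono ?_) (hspan X (Finset.mem_erase.mpr ⟨hXX, hX⟩))
        intro X' hX'
        exact ⟨Finset.mem_insert_of_mem hX'.1, hX'.2⟩

end

section

variable {F : Type} [Field F] {V : Type} [AddCommGroup V] [Module F V]

lemma get_map_indep_of {α : Type} [DecidableEq α] (ψ : α → V) (Z : Finset α) (l : List α)
    (hnd : l.Nodup) (hmem : ∀ x ∈ l, x ∈ Z)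
    (hli : LinearIndependent F (fun u : {x // x ∈ Z} => ψ u)) :
    LinearIndependent F (fun i => (l.map ψ).get i) := by
  set e : Fin (l.map ψ).length → {x // x ∈ Z} :=
    fun i => ⟨l.get (Fin.cast (List.length_map _) i), hmem _ (l.get_mem _)⟩ with he
  have heinj : Function.Injective e := by
    intro i j hij
    have hval : l.get (Fin.cast (List.length_map (as := l) ψ) i) = l.get (Fin.cast (List.length_map (as := l) ψ) j) :=
      congrArg Subtype.val hij
    have := List.nodup_iff_injective_get.mp hnd hval
    exact Fin.cast_injective _ this
  have hfun : (fun i => (l.map ψ).get i) = (fun u : {x // x ∈ Z} => ψ u) ∘ e := by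
    funext i
    simp [he, List.get_eq_getElem, List.getElem_map]
  rw [hfun]
  exact hli.comp e heinj

lemma indep_of_get_map {α : Type} [DecidableEq α] (ψ : α → V) (l : List α)
    (hL : LinearIndependent F (fun i => (l.map ψ).get i)) :
    l.Nodup ∧ LinearIndependent F (fun u : {x // x ∈ l.toFinset} => ψ u) := by
  have hinj := hL.injective
  have hgm : ∀ i : Fin l.length, (l.map ψ).get (Fin.cast (List.length_map (as := l) ψ).symm i)
      = ψ (l.get i) := by
    intro i; simp [List.get_eq_getElem, List.getElem_map]
  have hnd : l.Nodup := by
    rw [List.nodup_iff_injective_get]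
    intro i j hij
    have : (l.map ψ).get (Fin.cast (List.length_map (as := l) ψ).symm i)
        = (l.map ψ).get (Fin.cast (List.length_map (as := l) ψ).symm j) := by
      rw [hgm, hgm, hij]
    have := hinj this
    simpa [Fin.ext_iff] using this
  refine ⟨hnd, ?_⟩
  set e : Fin (l.map ψ).length → {x // x ∈ l.toFinset} :=
    fun i => ⟨l.get (Fin.cast (List.length_map _) i),
      List.mem_toFinset.mpr (l.get_mem _)⟩ with he
  have hbij : Function.Bijective e := by
    constructor
    · intro i j hij
      have hval : l.get (Fin.cast (List.length_map (as := l) ψ) i) = l.get (Fin.cast (List.length_map (as := l) ψ) j) :=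
        congrArg Subtype.val hij
      have := List.nodup_iff_injective_get.mp hnd hval
      exact Fin.cast_injective _ this
    · rintro ⟨x, hx⟩
      obtain ⟨i, hi⟩ := List.get_of_mem (List.mem_toFinset.mp hx)
      exact ⟨Fin.cast (List.length_map (as := l) ψ).symm i,
        Subtype.ext (by simpa [he, List.get_eq_getElem] using hi)⟩
  refine (linearIndependent_equiv (Equiv.ofBijective e hbij)
    (f := fun u : {x // x ∈ l.toFinset} => ψ u)).mp ?_
  have hfun : (fun u : {x // x ∈ l.toFinset} => ψ u) ∘ (Equiv.ofBijective e hbij)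
      = fun i => (l.map ψ).get i := by
    funext i
    simp [Equiv.ofBijective, he, List.get_eq_getElem, List.getElem_map]
  rw [hfun]
  exact hL

end



/-- `X` is the disjoint union of finitely many (possibly zero) members of `H`. -/
def IsDisjUnionOf {α : Type} [DecidableEq α] (H : Finset α → Prop) (X : Finset α) : Prop :=
  ∃ T : Finset (Finset α), (∀ A ∈ T, H A) ∧
    (↑T : Set (Finset α)).PairwiseDisjoint id ∧ X = T.sup id

/-- `w` is an inductive union maximizing function for the family `H`: there is a
generating function `g`, non-decreasing in its first argument, such that for every
nonempty `X ∈ B(H)`, `w X = max { g (w S) A : A ∈ H, S ∈ B(H), S ∩ A = ∅, S ∪ A = X }`. -/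
def IsIUM {α : Type} [DecidableEq α] (H : Finset α → Prop) (w : Finset α → ℝ) : Prop :=
  ∃ g : ℝ → Finset α → ℝ,
    (∀ A, H A → ∀ x y : ℝ, x ≤ y → g x A ≤ g y A) ∧
    ∀ X, IsDisjUnionOf H X → X ≠ ∅ →
      IsGreatest {y : ℝ | ∃ A S, H A ∧ IsDisjUnionOf H S ∧ Disjoint S A ∧
        S ∪ A = X ∧ y = g (w S) A} (w X)

/-- `Shat ⊆ S` is a max `q`-representative of `S` with respect to `w` for the matroid
with independent sets `I`. -/
def MaxQRep {α : Type} [DecidableEq α] (I : Finset α → Prop) (S : Set (Finset α))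
    (w : Finset α → ℝ) (q : ℕ) (Shat : Set (Finset α)) : Prop :=
  Shat ⊆ S ∧ ∀ Y : Finset α, Y.card ≤ q → ∀ X ∈ S, Disjoint X Y → I (X ∪ Y) →
    ∃ Xh ∈ Shat, Disjoint Xh Y ∧ I (Xh ∪ Y) ∧ w X ≤ w Xh

set_option maxHeartbeats 1000000 in
set_option synthInstance.maxHeartbeats 200000 in
theorem stmt3 {α : Type} [Fintype α] [DecidableEq α]
    (F : Type) [Field F] (W : Type) [AddCommGroup W] [Module F W]
    (I : Finset α → Prop) (hmat : IsIndepFamily I)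
    (φ : α → W)
    (hrep : ∀ S : Finset α,
      I S ↔ Set.InjOn φ ↑S ∧ LinearIndependent F (fun u : {x // x ∈ S} => φ u))
    (a b g r : ℕ) (hr : r = (a + b) * g) (hr1 : 1 ≤ r) (hg : 1 ≤ g)
    (hrank : ∀ B : Finset α, I B → (∀ x, x ∉ B → ¬ I (insert x B)) → B.card = r)
    (Hfam : Finset α → Prop) (hH : ∀ X, Hfam X → X.card = g)
    (w : Finset α → ℝ) (hw : IsIUM Hfam w)
    (Sfam : Set (Finset α))
    (hSfam : Sfam = {X | ∃ T : Finset (Finset α), T.card = a ∧ (∀ A ∈ T, Hfam A) ∧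
      (↑T : Set (Finset α)).PairwiseDisjoint id ∧ X = T.sup id ∧ I X}) :
    ∃ Shat : Finset (Finset α), (∀ X ∈ Shat, X ∈ Sfam) ∧
      MaxQRep I Sfam w (b * g) ↑Shat ∧ Shat.card ≤ Nat.choose r (a * g) := by
  classical
  -- every independent set has size at most r
  have hcard_le : ∀ S : Finset α, I S → S.card ≤ r := by
    intro S hS
    set P := Finset.univ.powerset.filter (fun B => S ⊆ B ∧ I B) with hP
    have hSP : S ∈ P := by simp [hP, hS]
    obtain ⟨B, hBP, hBmax⟩ := P.exists_max_image Finset.card ⟨S, hSP⟩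
    simp only [hP, Finset.mem_filter, Finset.mem_powerset] at hBP
    have hBmaxI : ∀ x, x ∉ B → ¬ I (insert x B) := by
      intro x hx hIx
      have hmem : insert x B ∈ P := by
        simp only [hP, Finset.mem_filter, Finset.mem_powerset]
        exact ⟨Finset.subset_univ _, hBP.2.1.trans (Finset.subset_insert _ _), hIx⟩
      have := hBmax _ hmem
      rw [Finset.card_insert_of_notMem hx] at this
      omega
    have hBr := hrank B hBP.2.2 hBmaxI
    calc S.card ≤ B.card := Finset.card_le_card hBP.2.1
      _ = r := hBr
  -- the span of the representation vectors
  set V := Submodule.span F (Set.range φ) with hV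
  haveI : FiniteDimensional F V := FiniteDimensional.span_of_finite F (Set.finite_range φ)
  set ψ : α → V := fun u => ⟨φ u, Submodule.subset_span ⟨u, rfl⟩⟩ with hψ
  set d := Module.finrank F ↥V with hd
  -- the dimension of V is at most r
  have hdr : d ≤ r := by
    obtain ⟨bset, hbsub, hbspan, hbli⟩ := exists_linearIndependent F (Set.range φ)
    have hbfin : bset.Finite := (Set.finite_range φ).subset hbsub
    haveI := hbfin.fintype
    have hne : Nonempty α := by
      by_contra hcon
      rw [not_nonempty_iff] at hcon
      have h0 := hrank ∅ hmat.1 (fun x _ => (hcon.false x).elim)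
      simp only [Finset.card_empty] at h0
      omega
    set S : Finset α := bset.toFinset.image (Function.invFun φ) with hSdef
    have hφinv : ∀ y ∈ bset, φ (Function.invFun φ y) = y := fun y hy =>
      Function.invFun_eq (hbsub hy)
    have himg : S.image φ = bset.toFinset := by
      rw [hSdef, Finset.image_image]
      have h1 : bset.toFinset.image (φ ∘ Function.invFun φ) = bset.toFinset.image id :=
        Finset.image_congr (fun y hy => hφinv y (Set.mem_toFinset.mp (by exact_mod_cast hy)))
      rw [h1, Finset.image_id]
    have hinjS : Set.InjOn φ ↑S := by
      intro x hx y hy hxy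
      rw [Finset.mem_coe, hSdef, Finset.mem_image] at hx hy
      obtain ⟨y1, hy1, rfl⟩ := hx
      obtain ⟨y2, hy2, rfl⟩ := hy
      rw [hφinv y1 (Set.mem_toFinset.mp hy1), hφinv y2 (Set.mem_toFinset.mp hy2)] at hxy
      rw [hxy]
    have hliS : LinearIndependent F (fun u : {x // x ∈ S} => φ u) := by
      set e : {x // x ∈ S} → bset := fun u => ⟨φ u, by
        have h2 : φ u.1 ∈ S.image φ := Finset.mem_image_of_mem φ u.2
        rw [himg] at h2
        exact Set.mem_toFinset.mp h2⟩ with he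
      have heinj : Function.Injective e := by
        intro u v huv
        have h3 : φ u.1 = φ v.1 := congrArg Subtype.val huv
        exact Subtype.ext (hinjS (Finset.mem_coe.mpr u.2) (Finset.mem_coe.mpr v.2) h3)
      have h4 : (fun u : {x // x ∈ S} => φ u) = Subtype.val ∘ e := rfl
      rw [h4]
      exact hbli.comp e heinj
    have hIS : I S := (hrep S).mpr ⟨hinjS, hliS⟩
    have h1 : S.card ≤ r := hcard_le S hIS
    have h2 : bset.toFinset.card ≤ S.card := by
      rw [← himg]
      exact Finset.card_image_le
    have h3 : d = bset.toFinset.card := by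
      rw [hd, hV, ← hbspan, finrank_span_set_eq_card hbli]
    omega
  set bV := Module.finBasis F ↥V with hbV
  letI : LinearOrder α := LinearOrder.lift' (Fintype.equivFin α) (Fintype.equivFin α).injective
  set ω : Finset α → ExteriorAlgebra F ↥V :=
    fun X => prodI F ((X.sort (· ≤ ·)).map ψ) with hω
  set k := a * g with hk
  subst hSfam
  -- every member of the family has k elements
  have hcardS : ∀ X ∈ {X | ∃ T : Finset (Finset α), T.card = a ∧ (∀ A ∈ T, Hfam A) ∧
      (↑T : Set (Finset α)).PairwiseDisjoint id ∧ X = T.sup id ∧ I X}, X.card = k := by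
    rintro X ⟨T, hTcard, hTH, hTdisj, rfl, hIX⟩
    rw [Finset.sup_eq_biUnion, Finset.card_biUnion]
    · have hconst : ∀ A ∈ T, (id A).card = g := fun A hA => by simpa using hH A (hTH A hA)
      rw [Finset.sum_congr rfl hconst, Finset.sum_const, hTcard, smul_eq_mul, hk]
    · intro A hA B hB hAB
      exact hTdisj (Finset.mem_coe.mpr hA) (Finset.mem_coe.mpr hB) hAB
  -- the relevant subspace of the exterior algebra and its dimension
  set W0 := Submodule.span F (Set.range (gensFun F bV k)) with hW0
  haveI : FiniteDimensional F W0 := FiniteDimensional.span_of_finite F (Set.finite_range _)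
  have hωmem : ∀ X : Finset α, X.card = k → ω X ∈ W0 := by
    intro X hX
    have := prodI_mem_span bV ((X.sort (· ≤ ·)).map ψ)
    rwa [List.length_map, Finset.length_sort, hX] at this
  have hfr : Module.finrank F ↥W0 ≤ Nat.choose r k := by
    haveI : Fintype (Set.range (gensFun F bV k)) := Set.fintypeRange _
    have h1 := finrank_span_le_card (R := F) (Set.range (gensFun F bV k))
    have h2 : (Set.range (gensFun F bV k)).toFinset.card ≤ Nat.choose d k := by
      rw [Set.toFinset_range]
      calc (Finset.univ.image (gensFun F bV k)).card
          ≤ Finset.univ.card := Finset.card_image_le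
        _ = Fintype.card {s : Finset (Fin d) // s.card = k} := Finset.card_univ
        _ = Nat.choose d k := by rw [Fintype.card_finset_len, Fintype.card_fin]
    exact le_trans (le_trans (hW0 ▸ h1) h2) (Nat.choose_le_choose k hdr)
  -- the pairing criteria
  have claim_pair : ∀ P Q : Finset α, Disjoint P Q → I (P ∪ Q) → ω P * ω Q ≠ 0 := by
    intro P Q hPQ hIPQ
    obtain ⟨hinjPQ, hliPQ⟩ := (hrep (P ∪ Q)).mp hIPQ
    have hψli : LinearIndependent F (fun u : {x // x ∈ P ∪ Q} => ψ u) := by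
      apply LinearIndependent.of_comp (V.subtype)
      exact hliPQ
    set l := P.sort (· ≤ ·) ++ Q.sort (· ≤ ·) with hl
    have hnd : l.Nodup := by
      rw [hl, List.nodup_append]
      refine ⟨Finset.sort_nodup _ _, Finset.sort_nodup _ _, ?_⟩
      intro x hx y hx' hxy
      subst hxy
      exact Finset.disjoint_left.mp hPQ (by simpa using hx) (by simpa using hx')
    have hmem : ∀ x ∈ l, x ∈ P ∪ Q := by
      intro x hx
      rw [hl, List.mem_append] at hx
      rw [Finset.mem_union]
      rcases hx with h | h
      · exact Or.inl (by simpa using h)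
      · exact Or.inr (by simpa using h)
    have hLI := get_map_indep_of ψ (P ∪ Q) l hnd hmem hψli
    have hne : prodI F (l.map ψ) ≠ 0 := by
      rw [prodI_eq_iMulti]
      exact iMulti_ne_zero_of_linearIndependent hLI
    have hmul : ω P * ω Q = prodI F (l.map ψ) := by
      simp only [hω]
      rw [hl, List.map_append, prodI_append]
    rw [hmul]
    exact hne
  have claim_conv : ∀ P Q : Finset α, ω P * ω Q ≠ 0 → Disjoint P Q ∧ I (P ∪ Q) := by
    intro P Q hne0
    set l := P.sort (· ≤ ·) ++ Q.sort (· ≤ ·) with hl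
    have h0 : prodI F (l.map ψ) ≠ 0 := by
      have hmul : prodI F (l.map ψ) = ω P * ω Q := by
        simp only [hω]
        rw [hl, List.map_append, prodI_append]
      rw [hmul]
      exact hne0
    have hLI : LinearIndependent F (fun i => (l.map ψ).get i) := by
      by_contra h
      exact h0 (prodI_eq_zero_of_not_linearIndependent h)
    obtain ⟨hnd, hli'⟩ := indep_of_get_map ψ l hLI
    have hdisj : Disjoint P Q := by
      rw [hl, List.nodup_append] at hnd
      rw [Finset.disjoint_left]
      intro x hxP hxQ
      exact hnd.2.2 x (by simpa using hxP) x (by simpa using hxQ) rfl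
    have htoF : l.toFinset = P ∪ Q := by
      rw [hl, List.toFinset_append]
      simp
    rw [htoF] at hli'
    have hφli : LinearIndependent F (fun u : {x // x ∈ P ∪ Q} => φ u) := by
      have h5 := hli'.map' V.subtype (Submodule.ker_subtype V)
      exact h5
    have hinjOn : Set.InjOn φ ↑(P ∪ Q) := by
      intro x hx y hy hxy
      have h : (⟨x, by exact_mod_cast hx⟩ : {x // x ∈ P ∪ Q}) = ⟨y, by exact_mod_cast hy⟩ :=
        hφli.injective hxy
      exact congrArg Subtype.val h
    exact ⟨hdisj, (hrep _).mpr ⟨hinjOn, hφli⟩⟩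
  -- greedy selection
  set C : Finset (Finset α) := Finset.univ.filter
    (fun X => X ∈ {X | ∃ T : Finset (Finset α), T.card = a ∧ (∀ A ∈ T, Hfam A) ∧
      (↑T : Set (Finset α)).PairwiseDisjoint id ∧ X = T.sup id ∧ I X}) with hC
  obtain ⟨C', hC'sub, hinj, hli, hspan⟩ := greedy_select F ω w C
  have hC'mem : ∀ X ∈ C', X ∈ {X | ∃ T : Finset (Finset α), T.card = a ∧ (∀ A ∈ T, Hfam A) ∧
      (↑T : Set (Finset α)).PairwiseDisjoint id ∧ X = T.sup id ∧ I X} := by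
    intro X hX
    have := hC'sub hX
    rw [hC, Finset.mem_filter] at this
    exact this.2
  refine ⟨C', hC'mem, ⟨fun X hX => hC'mem X (by exact_mod_cast hX), ?_⟩, ?_⟩
  · -- the representativity property
    intro Y hYcard X hXS hdisjXY hIXY
    have hXC : X ∈ C := by rw [hC, Finset.mem_filter]; exact ⟨Finset.mem_univ _, hXS⟩
    have hspanX := hspan X hXC
    have hne0 : ω X * ω Y ≠ 0 := claim_pair X Y hdisjXY hIXY
    by_contra hcon
    push_neg at hcon
    have hzero : ∀ z ∈ (fun t => t * ω Y) '' (ω '' {X' | X' ∈ C' ∧ w X ≤ w X'}), z = 0 := by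
      rintro _ ⟨_, ⟨Xh, ⟨hXh1, hXh2⟩, rfl⟩, rfl⟩
      by_contra hz
      obtain ⟨hd2, hI2⟩ := claim_conv Xh Y hz
      exact absurd hXh2 (not_le.mpr (hcon Xh (by exact_mod_cast hXh1) hd2 hI2))
    have hmem2 : ω X * ω Y ∈ Submodule.map (LinearMap.mulRight F (ω Y))
        (Submodule.span F (ω '' {X' | X' ∈ C' ∧ w X ≤ w X'})) := ⟨ω X, hspanX, rfl⟩
    rw [Submodule.map_span] at hmem2
    have hle : Submodule.span F ((LinearMap.mulRight F (ω Y)) ''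
        (ω '' {X' | X' ∈ C' ∧ w X ≤ w X'})) ≤ ⊥ := by
      rw [Submodule.span_le]
      intro z hz
      have : z = 0 := hzero z (by simpa using hz)
      simp [this]
    exact hne0 (by simpa using hle hmem2)
  · -- the cardinality bound
    have h1 : (C'.image ω).card = C'.card := Finset.card_image_of_injOn hinj
    have hsub2 : Submodule.span F (ω '' ↑C') ≤ W0 := by
      rw [Submodule.span_le]
      rintro _ ⟨X, hX, rfl⟩
      exact hωmem X (hcardS X (hC'mem X (by exact_mod_cast hX)))
    haveI : Fintype (ω '' (↑C' : Set (Finset α))) := ((C'.finite_toSet).image ω).fintype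
    have h3 : Module.finrank F (Submodule.span F (ω '' ↑C')) = (ω '' ↑C').toFinset.card :=
      finrank_span_set_eq_card hli
    have h4 : (ω '' ↑C').toFinset = C'.image ω := by
      ext z
      simp [Set.mem_toFinset]
    have h5 := Submodule.finrank_mono (R := F) hsub2
    calc C'.card = (ω '' ↑C').toFinset.card := by rw [h4, h1]
      _ = Module.finrank F (Submodule.span F (ω '' ↑C')) := h3.symm
      _ ≤ Module.finrank F ↥W0 := h5
      _ ≤ Nat.choose r k := hfr
end

section
/- Let M_1 = (U, I_1), …, M_m = (U, I_m) be matroids on the same finite ground set U, and let U_⊕ = U × {1,…,m}, f: 2^U → 2^{U_⊕} with f(S) = S × {1,…,m}, and I_⊕ = { I ⊆ U_⊕ : for each i ∈ {1,…,m}, {u ∈ U : (u,i) ∈ I} ∈ I_i }. Let S ⊆ 2^U be a family, w: S → ℝ, q a natural number, S_⊕ = { f(S) : S ∈ S }, and let w_⊕: S_⊕ → ℝ be the function (well-defined since f is injective) with w_⊕(f(S)) = w(S) for all S ∈ S. If Ŝ_⊕ ⊆ S_⊕ is a max (q·m)-representative of S_⊕ with respect to w_⊕ for the matroid (U_⊕,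 I_⊕), then Ŝ = { S ∈ S : f(S) ∈ Ŝ_⊕ } is a max intersection q-representative of S with respect to w for the matroids M_1, …, M_m, and |Ŝ| = |Ŝ_⊕|. -/
/-- `Shat ⊆ S` is a max intersection `q`-representative of `S` with respect to `w` for
the matroids with independent sets `I i`. -/
def MaxIntQRep {α : Type} [DecidableEq α] {m : ℕ} (I : Fin m → Finset α → Prop)
    (S : Set (Finset α)) (w : Finset α → ℝ) (q : ℕ) (Shat : Set (Finset α)) : Prop :=
  Shat ⊆ S ∧ ∀ Y : Finset α, Y.card ≤ q → ∀ X ∈ S, Disjoint X Y → (∀ i, I i (X ∪ Y)) →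
    ∃ Xh ∈ Shat, Disjoint Xh Y ∧ (∀ i, I i (Xh ∪ Y)) ∧ w X ≤ w Xh

theorem stmt5 {α : Type} [Fintype α] [DecidableEq α]
    (m : ℕ) (hm : 1 ≤ m)
    (I : Fin m → Finset α → Prop) (hI : ∀ i, IsIndepFamily (I i))
    (f : Finset α → Finset (α × Fin m))
    (hf : ∀ S : Finset α, f S = S ×ˢ (Finset.univ : Finset (Fin m)))
    (Iplus : Finset (α × Fin m) → Prop)
    (hIplus : ∀ J : Finset (α × Fin m),
      Iplus J ↔ ∀ i : Fin m, I i (Finset.univ.filter fun u => (u, i) ∈ J))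
    (Sfam : Set (Finset α)) (w : Finset α → ℝ) (q : ℕ)
    (Splus : Set (Finset (α × Fin m))) (hSplus : Splus = f '' Sfam)
    (wplus : Finset (α × Fin m) → ℝ) (hwplus : ∀ X ∈ Sfam, wplus (f X) = w X)
    (Shatplus : Set (Finset (α × Fin m)))
    (hrep : MaxQRep Iplus Splus wplus (q * m) Shatplus)
    (Shat : Set (Finset α)) (hShat : Shat = {X | X ∈ Sfam ∧ f X ∈ Shatplus}) :
    MaxIntQRep I Sfam w q Shat ∧ Shat.ncard = Shatplus.ncard := by
  have fdef : ∀ S : Finset α, ∀ p : α × Fin m, p ∈ f S ↔ p.1 ∈ S := by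
    intro S p; rw [hf]; simp
  have finj : Function.Injective f := by
    intro S T h
    ext u
    have := hm
    obtain ⟨i⟩ : Nonempty (Fin m) := ⟨⟨0, hm⟩⟩
    constructor
    · intro hu; have : (u, i) ∈ f S := (fdef S (u,i)).2 hu
      exact (fdef T (u,i)).1 (h ▸ this)
    · intro hu; have : (u, i) ∈ f T := (fdef T (u,i)).2 hu
      exact (fdef S (u,i)).1 (h ▸ this)
  have funion : ∀ A B : Finset α, f (A ∪ B) = f A ∪ f B := by
    intro A B; ext p
    simp [fdef]
  have hfilter : ∀ (A : Finset α) (i : Fin m),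
      (Finset.univ.filter fun u => (u, i) ∈ f A) = A := by
    intro A i; ext u; simp [fdef]
  have hIplusf : ∀ A : Finset α, Iplus (f A) ↔ ∀ i, I i A := by
    intro A; rw [hIplus]
    constructor
    · intro h i; have := h i; rwa [hfilter] at this
    · intro h i; rw [hfilter]; exact h i
  constructor
  · constructor
    · intro X hX; rw [hShat] at hX; exact hX.1
    · intro Y hY X hX hdisj hind
      have hdisj' : Disjoint (f X) (f Y) := by
        rw [Finset.disjoint_left]
        intro p hp hp'
        exact Finset.disjoint_left.1 hdisj ((fdef X p).1 hp) ((fdef Y p).1 hp')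
      have hcard : (f Y).card ≤ q * m := by
        rw [hf, Finset.card_product, Finset.card_univ, Fintype.card_fin]
        exact Nat.mul_le_mul_right m hY
      have hXS : f X ∈ Splus := by rw [hSplus]; exact ⟨X, hX, rfl⟩
      have hindp : Iplus (f X ∪ f Y) := by
        rw [← funion, hIplusf]; exact hind
      obtain ⟨Xhp, hXhp, hdisjp, hindp', hwp⟩ := hrep.2 (f Y) hcard (f X) hXS hdisj' hindp
      obtain ⟨Xh, hXhS, rfl⟩ : ∃ Xh ∈ Sfam, f Xh = Xhp := by
        have := hrep.1 hXhp; rw [hSplus] at this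
        obtain ⟨Xh, h1, h2⟩ := this; exact ⟨Xh, h1, h2⟩
      refine ⟨Xh, ?_, ?_, ?_, ?_⟩
      · rw [hShat]; exact ⟨hXhS, hXhp⟩
      · rw [Finset.disjoint_left]
        intro u hu hu'
        exact Finset.disjoint_left.1 hdisjp ((fdef Xh (u, ⟨0, hm⟩)).2 hu)
          ((fdef Y (u, ⟨0, hm⟩)).2 hu')
      · rw [← funion, hIplusf] at hindp'; exact hindp'
      · rw [hwplus X hX, hwplus Xh hXhS] at hwp; exact hwp
  · have himg : Shatplus = f '' Shat := by
      ext J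
      constructor
      · intro hJ
        obtain ⟨X, hX, rfl⟩ : ∃ X ∈ Sfam, f X = J := by
          have := hrep.1 hJ; rw [hSplus] at this
          obtain ⟨X, h1, h2⟩ := this; exact ⟨X, h1, h2⟩
        exact ⟨X, by rw [hShat]; exact ⟨hX, hJ⟩, rfl⟩
      · rintro ⟨X, hX, rfl⟩
        rw [hShat] at hX; exact hX.2
    rw [himg, Set.ncard_image_of_injective _ finj]
end

section
/- Consider an UFLP-MCC instance with a single facility matroid (U_1, A_1) and a single client matroid (V_1, C_1) that is uniform of rank r, i.e., C_1 = { S ⊆ V_1 : |S| ≤ r }. Assume k ≤ r and that for each color j ∈ {ℓ+1,…,ℓ+k} there is an element of V_1 of color j. For each u ∈ U with col(u) ∈ {1,…,ℓ} and each j ∈ Z_{col(u)}, choose f_u(j) ∈ V_1 with col(f_u(j)) = j maximizing p(u, ·) among all elements of V_1 of color j; set F(u) = { f_u(j) : j ∈ Z_{col(u)} } and w(u) = −c(u) + Σ_{v∈F(u)} p(u,v). Suppose A ∈ A_1 contains exactly one element of each color in {1,…,ℓ} and no other elements, and A maximizes Σ_{u∈A'} w(u) among all A' ∈ A_1 containing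 exactly one element of each color in {1,…,ℓ} and no other elements. Then (A, ⋃_{u∈A} F(u)) is a feasible solution of the UFLP-MCC instance, and its colored profit is at least the colored profit of every feasible solution. -/
/-- The colored profit of the UFLP-MCC problem:
`Σ_{u∈A} (−c u + Σ_{v ∈ C ∩ Z(u)} p u v)` where `Z(u) = {v : col v ∈ Z (col u)}`. -/
def ccProfit {α : Type} [DecidableEq α] (p : α → α → ℕ) (c : α → ℕ)
    (col : α → ℕ) (Z : ℕ → Finset ℕ) (A C : Finset α) : ℤ :=
  ∑ u ∈ A, (-(c u : ℤ) + ∑ v ∈ C.filter (fun v => col v ∈ Z (col u)), (p u v : ℤ))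

/-- Feasibility for an UFLP-MCC instance with a single facility matroid (independent
sets `FacI`) and a single client matroid (independent sets `CliI`). -/
def ccFeasible {α : Type} [DecidableEq α] (ℓ k : ℕ) (col : α → ℕ)
    (FacI CliI : Finset α → Prop) (A C : Finset α) : Prop :=
  Disjoint A C ∧
  (∀ u ∈ A, col u ∈ Finset.Icc 1 ℓ) ∧
  (∀ i ∈ Finset.Icc 1 ℓ, (A.filter fun u => col u = i).card = 1) ∧
  (∀ v ∈ C, col v ∈ Finset.Icc (ℓ + 1) (ℓ + k)) ∧
  (∀ i ∈ Finset.Icc (ℓ + 1) (ℓ + k), (C.filter fun v => col v = i).card = 1) ∧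
  FacI A ∧ CliI C

theorem stmt7 {α : Type} [Fintype α] [DecidableEq α]
    (ℓ k r : ℕ) (hℓ : 1 ≤ ℓ) (hk : 1 ≤ k) (hkr : k ≤ r)
    (col : α → ℕ) (hcol : ∀ u, col u ∈ Finset.Icc 1 (ℓ + k))
    (Z : ℕ → Finset ℕ)
    (hZne : ∀ i ∈ Finset.Icc 1 ℓ, (Z i).Nonempty)
    (hZdisj : ∀ i ∈ Finset.Icc 1 ℓ, ∀ j ∈ Finset.Icc 1 ℓ, i ≠ j → Disjoint (Z i) (Z j))
    (hZunion : (Finset.Icc 1 ℓ).biUnion Z = Finset.Icc (ℓ + 1) (ℓ + k))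
    (p : α → α → ℕ) (c : α → ℕ)
    (U₁ : Finset α) (FacI : Finset α → Prop)
    (hFacMat : IsIndepFamily FacI) (hFacGround : ∀ J, FacI J → J ⊆ U₁)
    (V₁ : Finset α) (CliI : Finset α → Prop)
    (hCliI : ∀ J : Finset α, CliI J ↔ J ⊆ V₁ ∧ J.card ≤ r)
    (hVcol : ∀ j ∈ Finset.Icc (ℓ + 1) (ℓ + k), ∃ v ∈ V₁, col v = j)
    (f : α → ℕ → α)
    (hf : ∀ u, col u ∈ Finset.Icc 1 ℓ → ∀ j ∈ Z (col u),
      f u j ∈ V₁ ∧ col (f u j) = j ∧ ∀ v ∈ V₁, col v = j → p u v ≤ p u (f u j))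
    (Fol : α → Finset α) (hFol : ∀ u, Fol u = (Z (col u)).image (f u))
    (w : α → ℤ) (hw : ∀ u, w u = -(c u : ℤ) + ∑ v ∈ Fol u, (p u v : ℤ))
    (A : Finset α)
    (hAind : FacI A)
    (hAonly : ∀ u ∈ A, col u ∈ Finset.Icc 1 ℓ)
    (hAcol : ∀ i ∈ Finset.Icc 1 ℓ, (A.filter fun u => col u = i).card = 1)
    (hAmax : ∀ A' : Finset α, FacI A' →
      (∀ u ∈ A', col u ∈ Finset.Icc 1 ℓ) →
      (∀ i ∈ Finset.Icc 1 ℓ, (A'.filter fun u => col u = i).card = 1) →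
      ∑ u ∈ A', w u ≤ ∑ u ∈ A, w u) :
    ccFeasible ℓ k col FacI CliI A (A.biUnion Fol) ∧
    ∀ A' C' : Finset α, ccFeasible ℓ k col FacI CliI A' C' →
      ccProfit p c col Z A' C' ≤ ccProfit p c col Z A (A.biUnion Fol) := by
  have hZsub : ∀ i ∈ Finset.Icc 1 ℓ, Z i ⊆ Finset.Icc (ℓ+1) (ℓ+k) := by
    intro i hi j hj
    rw [← hZunion]; exact Finset.mem_biUnion.mpr ⟨i, hi, hj⟩
  have hZuniq : ∀ i₀ ∈ Finset.Icc 1 ℓ, ∀ i₁ ∈ Finset.Icc 1 ℓ, ∀ j, j ∈ Z i₀ → j ∈ Z i₁ →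
      i₀ = i₁ := by
    intro i₀ h₀ i₁ h₁ j hj₀ hj₁
    by_contra hne
    exact (Finset.disjoint_left.mp (hZdisj i₀ h₀ i₁ h₁ hne)) hj₀ hj₁
  -- elements of C := A.biUnion Fol
  have hCspec : ∀ v ∈ A.biUnion Fol, ∃ u ∈ A, ∃ j ∈ Z (col u), v = f u j := by
    intro v hv
    obtain ⟨u, hu, hvF⟩ := Finset.mem_biUnion.mp hv
    rw [hFol u] at hvF
    obtain ⟨j, hj, rfl⟩ := Finset.mem_image.mp hvF
    exact ⟨u, hu, j, hj, rfl⟩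
  have hCcol : ∀ v ∈ A.biUnion Fol, col v ∈ Finset.Icc (ℓ+1) (ℓ+k) := by
    intro v hv
    obtain ⟨u, hu, j, hj, rfl⟩ := hCspec v hv
    rw [(hf u (hAonly u hu) j hj).2.1]
    exact hZsub (col u) (hAonly u hu) hj
  -- unique element of each facility color in a set with the color constraints
  have huniq : ∀ (S : Finset α) (i : ℕ), (S.filter (fun u => col u = i)).card = 1 →
      ∀ u ∈ S, col u = i → ∀ u' ∈ S, col u' = i → u = u' := by
    intro S i hcard u hu hcu u' hu' hcu'
    exact Finset.card_le_one.mp (le_of_eq hcard) u (Finset.mem_filter.mpr ⟨hu, hcu⟩)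
      u' (Finset.mem_filter.mpr ⟨hu', hcu'⟩)
  -- the element of A of a given color
  have hAone : ∀ i ∈ Finset.Icc 1 ℓ, ∃ u ∈ A, col u = i := by
    intro i hi
    obtain ⟨u, hu⟩ := Finset.card_eq_one.mp (hAcol i hi)
    have : u ∈ A.filter (fun u => col u = i) := by rw [hu]; exact Finset.mem_singleton_self u
    exact ⟨u, (Finset.mem_filter.mp this).1, (Finset.mem_filter.mp this).2⟩
  -- the C filter for each client color is a singleton
  have hCone : ∀ i ∈ Finset.Icc (ℓ+1) (ℓ+k), ∃ u ∈ A, i ∈ Z (col u) ∧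
      (A.biUnion Fol).filter (fun v => col v = i) = {f u i} := by
    intro i hi
    have : i ∈ (Finset.Icc 1 ℓ).biUnion Z := hZunion ▸ hi
    obtain ⟨i₀, hi₀, hiZ⟩ := Finset.mem_biUnion.mp this
    obtain ⟨u, huA, hucol⟩ := hAone i₀ hi₀
    refine ⟨u, huA, hucol ▸ hiZ, ?_⟩
    ext v
    simp only [Finset.mem_filter, Finset.mem_singleton]
    constructor
    · rintro ⟨hvC, hvcol⟩
      obtain ⟨u', hu', j, hj, rfl⟩ := hCspec v hvC
      have hcolj : col (f u' j) = j := (hf u' (hAonly u' hu') j hj).2.1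
      have hji : j = i := by rw [← hcolj, hvcol]
      subst hji
      have hcu' : col u' = i₀ := hZuniq (col u') (hAonly u' hu') i₀ hi₀ j hj hiZ
      have : u' = u := huniq A i₀ (hAcol i₀ hi₀) u' hu' hcu' u huA hucol
      rw [this]
    · rintro rfl
      have hiZu : i ∈ Z (col u) := hucol ▸ hiZ
      refine ⟨Finset.mem_biUnion.mpr ⟨u, huA, ?_⟩, (hf u (hAonly u huA) i hiZu).2.1⟩
      rw [hFol u]
      exact Finset.mem_image.mpr ⟨i, hiZu, rfl⟩
  have hCcount : ∀ i ∈ Finset.Icc (ℓ+1) (ℓ+k),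
      ((A.biUnion Fol).filter (fun v => col v = i)).card = 1 := by
    intro i hi
    obtain ⟨u, _, _, heq⟩ := hCone i hi
    rw [heq, Finset.card_singleton]
  have hCV : A.biUnion Fol ⊆ V₁ := by
    intro v hv
    obtain ⟨u, hu, j, hj, rfl⟩ := hCspec v hv
    exact (hf u (hAonly u hu) j hj).1
  have hCcard : (A.biUnion Fol).card = k := by
    rw [Finset.card_eq_sum_card_fiberwise hCcol]
    rw [Finset.sum_congr rfl hCcount, Finset.sum_const, smul_eq_mul, mul_one, Nat.card_Icc]
    omega
  have hdisj : Disjoint A (A.biUnion Fol) := by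
    rw [Finset.disjoint_left]
    intro a ha haC
    have h1 := Finset.mem_Icc.mp (hAonly a ha)
    have h2 := Finset.mem_Icc.mp (hCcol a haC)
    omega
  have hfeas : ccFeasible ℓ k col FacI CliI A (A.biUnion Fol) :=
    ⟨hdisj, hAonly, hAcol, hCcol, hCcount, hAind,
      (hCliI _).mpr ⟨hCV, by rw [hCcard]; exact hkr⟩⟩
  refine ⟨hfeas, ?_⟩
  -- profit of (A, C) equals ∑ w
  have hFolkey : ∀ u ∈ A, (A.biUnion Fol).filter (fun v => col v ∈ Z (col u)) = Fol u := by
    intro u hu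
    ext v
    simp only [Finset.mem_filter]
    constructor
    · rintro ⟨hvC, hvZ⟩
      obtain ⟨u', hu', j, hj, rfl⟩ := hCspec v hvC
      have hcolj : col (f u' j) = j := (hf u' (hAonly u' hu') j hj).2.1
      have hcu' : col u' = col u :=
        hZuniq (col u') (hAonly u' hu') (col u) (hAonly u hu) j hj (hcolj ▸ hvZ)
      have : u' = u := huniq A (col u) (hAcol (col u) (hAonly u hu)) u' hu' hcu' u hu rfl
      subst this
      rw [hFol u']
      exact Finset.mem_image.mpr ⟨j, hj, rfl⟩
    · intro hvF
      have hvF' := hvF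
      rw [hFol u] at hvF'
      obtain ⟨j, hj, rfl⟩ := Finset.mem_image.mp hvF'
      exact ⟨Finset.mem_biUnion.mpr ⟨u, hu, hvF⟩, by rw [(hf u (hAonly u hu) j hj).2.1]; exact hj⟩
  have hprofA : ccProfit p c col Z A (A.biUnion Fol) = ∑ u ∈ A, w u := by
    unfold ccProfit
    refine Finset.sum_congr rfl fun u hu => ?_
    rw [hFolkey u hu, hw u]
  rw [hprofA]
  -- bound for any feasible solution
  intro A' C' hfe
  obtain ⟨hd', hA'only, hA'col, hC'col, hC'count, hA'ind, hC'ind⟩ := hfe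
  have hC'V : C' ⊆ V₁ := ((hCliI C').mp hC'ind).1
  have hkey : ∀ u ∈ A',
      (-(c u : ℤ) + ∑ v ∈ C'.filter (fun v => col v ∈ Z (col u)), (p u v : ℤ)) ≤ w u := by
    intro u hu
    rw [hw u]
    have hucol := hA'only u hu
    have hle : (∑ v ∈ C'.filter (fun v => col v ∈ Z (col u)), p u v) ≤
        ∑ v ∈ Fol u, p u v := by
      have hinj : Set.InjOn col ↑(C'.filter (fun v => col v ∈ Z (col u))) := by
        intro v hv v' hv' hvv
        simp only [Finset.coe_filter, Set.mem_setOf_eq] at hv hv'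
        have hj : col v ∈ Finset.Icc (ℓ+1) (ℓ+k) := hZsub (col u) hucol hv.2
        exact huniq C' (col v) (hC'count (col v) hj) v hv.1 rfl v' hv'.1 hvv.symm
      calc (∑ v ∈ C'.filter (fun v => col v ∈ Z (col u)), p u v)
          ≤ ∑ v ∈ C'.filter (fun v => col v ∈ Z (col u)), p u (f u (col v)) := by
            refine Finset.sum_le_sum fun v hv => ?_
            have hv' := Finset.mem_filter.mp hv
            exact (hf u hucol (col v) hv'.2).2.2 v (hC'V hv'.1) rfl
        _ = ∑ j ∈ (C'.filter (fun v => col v ∈ Z (col u))).image col, p u (f u j) :=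
            by rw [Finset.sum_image (fun v hv v' hv' h => hinj hv hv' h)]
        _ ≤ ∑ j ∈ Z (col u), p u (f u j) := by
            refine Finset.sum_le_sum_of_subset ?_
            intro j hj
            obtain ⟨v, hv, rfl⟩ := Finset.mem_image.mp hj
            exact (Finset.mem_filter.mp hv).2
        _ = ∑ v ∈ Fol u, p u v := by
            rw [hFol u]
            rw [Finset.sum_image (fun j hj j' hj' h => by
              rw [← (hf u hucol j hj).2.1, ← (hf u hucol j' hj').2.1, h])]
    have : ((∑ v ∈ C'.filter (fun v => col v ∈ Z (col u)), p u v : ℕ) : ℤ) ≤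
        ((∑ v ∈ Fol u, p u v : ℕ) : ℤ) := Int.ofNat_le.mpr hle
    push_cast at this
    linarith
  calc ccProfit p c col Z A' C' ≤ ∑ u ∈ A', w u := Finset.sum_le_sum hkey
    _ ≤ ∑ u ∈ A, w u := hAmax A' hA'ind hA'only hA'col
end

section
/- Consider an UFLP-MC instance on the linearly ordered universe U = {1,…,n}. Let (A, C) be a feasible solution of maximum UFLP-MC profit such that |A| is minimum among all feasible solutions of maximum profit. For v ∈ C define m(v) = min{ u ∈ A : p(u,v) = max_{w∈A} p(w,v) }. Then for every u ∈ A there exists v ∈ C with m(v) = u. -/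
theorem stmt8 (n : ℕ) (p : Fin n → Fin n → ℕ) (c : Fin n → ℕ)
    (a b : ℕ)
    (Fac : Fin a → Finset (Fin n) → Prop) (Cli : Fin b → Finset (Fin n) → Prop)
    (hFac : ∀ i, IsIndepFamily (Fac i)) (hCli : ∀ j, IsIndepFamily (Cli j))
    (A C : Finset (Fin n))
    (hfeas : Disjoint A C ∧ (∀ i, Fac i A) ∧ (∀ j, Cli j C))
    (hopt : ∀ A' C' : Finset (Fin n),
      (Disjoint A' C' ∧ (∀ i, Fac i A') ∧ (∀ j, Cli j C')) →
      mcProfit p c A' C' ≤ mcProfit p c A C)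
    (hmin : ∀ A' C' : Finset (Fin n),
      (Disjoint A' C' ∧ (∀ i, Fac i A') ∧ (∀ j, Cli j C')) →
      mcProfit p c A' C' = mcProfit p c A C → A.card ≤ A'.card) :
    ∀ u ∈ A, ∃ v ∈ C, p u v = A.sup (fun x => p x v) ∧
      ∀ u' ∈ A, p u' v = A.sup (fun x => p x v) → u ≤ u' := by
  intro u hu
  by_contra hcon
  push_neg at hcon
  set A' := A.erase u with hA'
  have hsub : A' ⊆ A := Finset.erase_subset _ _
  have hfeas' : Disjoint A' C ∧ (∀ i, Fac i A') ∧ (∀ j, Cli j C) :=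
    ⟨hfeas.1.mono_left hsub, fun i => (hFac i).2.1 A' A hsub (hfeas.2.1 i), hfeas.2.2⟩
  have hsup : ∀ v ∈ C, A'.sup (fun x => p x v) = A.sup (fun x => p x v) := by
    intro v hv
    refine le_antisymm (Finset.sup_mono hsub) ?_
    obtain ⟨w, hw, hweq⟩ := Finset.exists_mem_eq_sup A ⟨u, hu⟩ (fun x => p x v)
    by_cases hue : p u v = A.sup (fun x => p x v)
    · obtain ⟨u', hu', heq, hlt⟩ := hcon v hv hue
      calc A.sup (fun x => p x v) = p u' v := heq.symm
        _ ≤ A'.sup (fun x => p x v) := Finset.le_sup (f := fun x => p x v) (Finset.mem_erase.2 ⟨hlt.ne, hu'⟩)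
    · have hwu : w ≠ u := by rintro rfl; exact hue hweq.symm
      calc A.sup (fun x => p x v) = p w v := hweq
        _ ≤ A'.sup (fun x => p x v) := Finset.le_sup (f := fun x => p x v) (Finset.mem_erase.2 ⟨hwu, hw⟩)
  have hcost : ∑ x ∈ A, (c x : ℤ) = (c u : ℤ) + ∑ x ∈ A', (c x : ℤ) :=
    (Finset.add_sum_erase _ _ hu).symm
  have hprofit : mcProfit p c A' C = mcProfit p c A C + c u := by
    unfold mcProfit
    rw [Finset.sum_congr rfl (fun v hv => by rw [hsup v hv]), hcost]
    ring
  have hle := hopt A' C hfeas'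
  have hcu : (c u : ℤ) ≥ 0 := Int.ofNat_nonneg _
  have heqp : mcProfit p c A' C = mcProfit p c A C := by omega
  have hge := hmin A' C hfeas' heqp
  have hcard : A'.card = A.card - 1 := Finset.card_erase_of_mem hu
  have hpos : 0 < A.card := Finset.card_pos.2 ⟨u, hu⟩
  omega
end

section
/- Consider an UFLP-MC instance on the linearly ordered universe U = {1,…,n}. Let (A, C) be a feasible solution of maximum UFLP-MC profit such that |A| is minimum among all feasible solutions of maximum profit, with ℓ := |A| ≥ 1 and k := |C| ≥ 1, and for v ∈ C define m(v) = min{ u ∈ A : p(u,v) = max_{w∈A} p(w,v) }. Let col: U → {1,…,ℓ+k} be any coloring that is injective on A ∪ C with col(A) = {1,…,ℓ} and col(C) = {ℓ+1,…,ℓ+k}. For i ∈ {1,…,ℓ} define Z_i = { col(v) : v ∈ C and col(m(v)) = i }. Then the sets Z_1, …, Z_ℓ are nonempty, pairwise disjoint, and their union is {ℓ+1,…,ℓ+k}; moreover, (A, C) is a feasible solution of the UFLP-MCC instance with the same universe, profits, costs, facility matroids and client matroids, with coloring col and partition Z_1, …, Z_ℓ, and its colored profit Σ_{u∈A}(−c(u)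 + Σ_{v∈C∩Z(u)} p(u,v)) equals the UFLP-MC profit of (A, C). -/
theorem stmt9 (n : ℕ) (p : Fin n → Fin n → ℕ) (c : Fin n → ℕ)
    (a b : ℕ)
    (Fac : Fin a → Finset (Fin n) → Prop) (Cli : Fin b → Finset (Fin n) → Prop)
    (hFac : ∀ i, IsIndepFamily (Fac i)) (hCli : ∀ j, IsIndepFamily (Cli j))
    (A C : Finset (Fin n))
    (hfeas : Disjoint A C ∧ (∀ i, Fac i A) ∧ (∀ j, Cli j C))
    (hopt : ∀ A' C' : Finset (Fin n),
      (Disjoint A' C' ∧ (∀ i, Fac i A') ∧ (∀ j, Cli j C')) →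
      mcProfit p c A' C' ≤ mcProfit p c A C)
    (hmin : ∀ A' C' : Finset (Fin n),
      (Disjoint A' C' ∧ (∀ i, Fac i A') ∧ (∀ j, Cli j C')) →
      mcProfit p c A' C' = mcProfit p c A C → A.card ≤ A'.card)
    (ℓ k : ℕ) (hℓ : ℓ = A.card) (hk : k = C.card) (hℓ1 : 1 ≤ ℓ) (hk1 : 1 ≤ k)
    (μ : Fin n → Fin n)
    (hμ : ∀ v ∈ C, μ v ∈ A ∧ p (μ v) v = A.sup (fun x => p x v) ∧
      ∀ u ∈ A, p u v = A.sup (fun x => p x v) → μ v ≤ u)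
    (col : Fin n → ℕ)
    (hcolrange : ∀ u, col u ∈ Finset.Icc 1 (ℓ + k))
    (hinj : Set.InjOn col ↑(A ∪ C))
    (hcolA : A.image col = Finset.Icc 1 ℓ)
    (hcolC : C.image col = Finset.Icc (ℓ + 1) (ℓ + k))
    (Z : ℕ → Finset ℕ)
    (hZ : ∀ i, Z i = (C.filter fun v => col (μ v) = i).image col) :
    (∀ i ∈ Finset.Icc 1 ℓ, (Z i).Nonempty) ∧
    (∀ i ∈ Finset.Icc 1 ℓ, ∀ j ∈ Finset.Icc 1 ℓ, i ≠ j → Disjoint (Z i) (Z j)) ∧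
    ((Finset.Icc 1 ℓ).biUnion Z = Finset.Icc (ℓ + 1) (ℓ + k)) ∧
    ((∀ u ∈ A, col u ∈ Finset.Icc 1 ℓ) ∧
      (∀ i ∈ Finset.Icc 1 ℓ, (A.filter fun u => col u = i).card = 1) ∧
      (∀ v ∈ C, col v ∈ Finset.Icc (ℓ + 1) (ℓ + k)) ∧
      (∀ i ∈ Finset.Icc (ℓ + 1) (ℓ + k), (C.filter fun v => col v = i).card = 1)) ∧
    ccProfit p c col Z A C = mcProfit p c A C := by

  obtain ⟨hdisj, hFacA, hCliC⟩ := hfeas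
  have hAsub : ↑A ⊆ (↑(A ∪ C) : Set (Fin n)) := by
    intro x hx; simp only [Finset.coe_union, Set.mem_union]; exact Or.inl hx
  have hCsub : ↑C ⊆ (↑(A ∪ C) : Set (Fin n)) := by
    intro x hx; simp only [Finset.coe_union, Set.mem_union]; exact Or.inr hx
  have hinjA : ∀ u ∈ A, ∀ w ∈ A, col u = col w → u = w := fun u hu w hw h =>
    hinj (hAsub hu) (hAsub hw) h
  have hinjC : ∀ u ∈ C, ∀ w ∈ C, col u = col w → u = w := fun u hu w hw h =>
    hinj (hCsub hu) (hCsub hw) h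
  -- surjectivity of μ onto A
  have hsurj : ∀ u ∈ A, ∃ v ∈ C, μ v = u := by
    intro u hu
    by_contra h
    push_neg at h
    set A' := A.erase u with hA'
    have hμA' : ∀ v ∈ C, μ v ∈ A' := by
      intro v hv
      exact Finset.mem_erase.mpr ⟨h v hv, (hμ v hv).1⟩
    have hsup : ∀ v ∈ C, A'.sup (fun x => p x v) = A.sup (fun x => p x v) := by
      intro v hv
      refine le_antisymm (Finset.sup_mono (Finset.erase_subset _ _)) ?_
      rw [← (hμ v hv).2.1]
      exact Finset.le_sup (f := fun x => p x v) (hμA' v hv)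
    have hfeas' : Disjoint A' C ∧ (∀ i, Fac i A') ∧ (∀ j, Cli j C) := by
      refine ⟨Finset.disjoint_of_subset_left (Finset.erase_subset _ _) hdisj, ?_, hCliC⟩
      intro i
      exact (hFac i).2.1 A' A (Finset.erase_subset _ _) (hFacA i)
    have hge : mcProfit p c A C ≤ mcProfit p c A' C := by
      unfold mcProfit
      have h1 : (∑ v ∈ C, ((A'.sup fun x => p x v : ℕ) : ℤ)) =
          ∑ v ∈ C, ((A.sup fun x => p x v : ℕ) : ℤ) := by
        refine Finset.sum_congr rfl fun v hv => ?_
        rw [hsup v hv]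
      have h2 : (∑ x ∈ A', (c x : ℤ)) ≤ ∑ x ∈ A, (c x : ℤ) := by
        refine Finset.sum_le_sum_of_subset_of_nonneg (Finset.erase_subset _ _) ?_
        intro x _ _; positivity
      rw [h1]; omega
    have heq : mcProfit p c A' C = mcProfit p c A C :=
      le_antisymm (hopt A' C hfeas') hge
    have hcard := hmin A' C hfeas' heq
    have : A'.card = A.card - 1 := Finset.card_erase_of_mem hu
    have hpos : 0 < A.card := Finset.card_pos.mpr ⟨u, hu⟩
    omega
  have hmemZ : ∀ v ∈ C, ∀ u ∈ A, (col v ∈ Z (col u) ↔ μ v = u) := by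
    intro v hv u hu
    rw [hZ]
    simp only [Finset.mem_image, Finset.mem_filter]
    constructor
    · rintro ⟨v', ⟨hv', hcv'⟩, hcol⟩
      have hv'v : v' = v := hinjC v' hv' v hv hcol
      rw [hv'v] at hcv'
      exact hinjA _ (hμ v hv).1 u hu hcv'
    · intro h
      exact ⟨v, ⟨hv, by rw [h]⟩, rfl⟩
  refine ⟨?_, ?_, ?_, ⟨?_, ?_, ?_, ?_⟩, ?_⟩
  · -- nonemptiness
    intro i hi
    rw [← hcolA] at hi
    obtain ⟨u, hu, hcu⟩ := Finset.mem_image.mp hi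
    obtain ⟨v, hv, hμv⟩ := hsurj u hu
    refine ⟨col v, ?_⟩
    rw [hZ]
    exact Finset.mem_image.mpr ⟨v, Finset.mem_filter.mpr ⟨hv, by rw [hμv, hcu]⟩, rfl⟩
  · -- disjointness
    intro i _ j _ hij
    rw [Finset.disjoint_left]
    intro x hxi hxj
    rw [hZ] at hxi hxj
    obtain ⟨v1, hv1, hc1⟩ := Finset.mem_image.mp hxi
    obtain ⟨v2, hv2, hc2⟩ := Finset.mem_image.mp hxj
    rw [Finset.mem_filter] at hv1 hv2
    have : v1 = v2 := hinjC v1 hv1.1 v2 hv2.1 (hc1.trans hc2.symm)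
    subst this
    exact hij (hv1.2 ▸ hv2.2 ▸ rfl)
  · -- union
    ext x
    simp only [Finset.mem_biUnion]
    constructor
    · rintro ⟨i, hi, hx⟩
      rw [hZ] at hx
      obtain ⟨v, hv, hcv⟩ := Finset.mem_image.mp hx
      rw [Finset.mem_filter] at hv
      rw [← hcolC, ← hcv]
      exact Finset.mem_image_of_mem col hv.1
    · intro hx
      rw [← hcolC] at hx
      obtain ⟨v, hv, hcv⟩ := Finset.mem_image.mp hx
      refine ⟨col (μ v), ?_, ?_⟩
      · rw [← hcolA]; exact Finset.mem_image_of_mem col (hμ v hv).1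
      · rw [hZ]
        exact Finset.mem_image.mpr ⟨v, Finset.mem_filter.mpr ⟨hv, rfl⟩, hcv⟩
  · -- A colors in range
    intro u hu
    rw [← hcolA]; exact Finset.mem_image_of_mem col hu
  · -- A filter card 1
    intro i hi
    rw [← hcolA] at hi
    obtain ⟨u, hu, hcu⟩ := Finset.mem_image.mp hi
    rw [Finset.card_eq_one]
    refine ⟨u, ?_⟩
    ext x
    simp only [Finset.mem_filter, Finset.mem_singleton]
    constructor
    · rintro ⟨hx, hcx⟩
      exact hinjA x hx u hu (hcx.trans hcu.symm)
    · rintro rfl; exact ⟨hu, hcu⟩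
  · intro v hv
    rw [← hcolC]; exact Finset.mem_image_of_mem col hv
  · intro i hi
    rw [← hcolC] at hi
    obtain ⟨v, hv, hcv⟩ := Finset.mem_image.mp hi
    rw [Finset.card_eq_one]
    refine ⟨v, ?_⟩
    ext x
    simp only [Finset.mem_filter, Finset.mem_singleton]
    constructor
    · rintro ⟨hx, hcx⟩
      exact hinjC x hx v hv (hcx.trans hcv.symm)
    · rintro rfl; exact ⟨hv, hcv⟩
  · -- profit equality
    unfold ccProfit mcProfit
    rw [Finset.sum_add_distrib]
    have hfil : ∀ u ∈ A, (C.filter fun v => col v ∈ Z (col u)) =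
        (C.filter fun v => μ v = u) := by
      intro u hu
      refine Finset.filter_congr fun v hv => ?_
      exact hmemZ v hv u hu
    have key : ∑ u ∈ A, ∑ v ∈ C.filter (fun v => col v ∈ Z (col u)), ((p u v : ℕ) : ℤ) =
        ∑ v ∈ C, ((A.sup fun x => p x v : ℕ) : ℤ) := by
      rw [Finset.sum_congr rfl fun u hu => by rw [hfil u hu]]
      have : ∑ u ∈ A, ∑ v ∈ C.filter (fun v => μ v = u), ((p u v : ℕ) : ℤ) =
          ∑ u ∈ A, ∑ v ∈ C.filter (fun v => μ v = u), ((p (μ v) v : ℕ) : ℤ) := by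
        refine Finset.sum_congr rfl fun u hu => Finset.sum_congr rfl fun v hv => ?_
        rw [(Finset.mem_filter.mp hv).2]
      rw [this, Finset.sum_fiberwise_of_maps_to (fun v hv => (hμ v hv).1)]
      refine Finset.sum_congr rfl fun v hv => ?_
      rw [(hμ v hv).2.1]
    rw [key]
    rw [Finset.sum_neg_distrib]
    ring
end

section
/- Let V = {a, b, c, d} be a four-element set, let u_1 = {a}, v_1 = {c}, u_2 = {a, b}, v_2 = {c, d}, let U = {u_1, v_1, u_2, v_2} ⊆ 2^V, and let H = { {u_1}, {v_1}, {u_2}, {v_2} } be the family of singletons of U. Let f: 2^U → ℝ be the coverage function f(S) = |⋃_{s∈S} s|. Then f is not an inductive union maximizing function for H: there is no function g: ℝ × H → ℝ that is non-decreasing in its first argument and satisfies f(X) = max{ g(f(S), H) : H ∈ H, S ⊆ U, S ∩ H = ∅, S ∪ H = X } for every nonempty X ⊆ U. -/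
theorem stmt11 {V : Type} [DecidableEq V] (a b c d : V)
    (hab : a ≠ b) (hac : a ≠ c) (had : a ≠ d)
    (hbc : b ≠ c) (hbd : b ≠ d) (hcd : c ≠ d)
    (u₁ v₁ u₂ v₂ : Finset V)
    (hu₁ : u₁ = {a}) (hv₁ : v₁ = {c}) (hu₂ : u₂ = {a, b}) (hv₂ : v₂ = {c, d})
    (Uset : Finset (Finset V)) (hU : Uset = {u₁, v₁, u₂, v₂})
    (Hfam : Finset (Finset V) → Prop)
    (hH : ∀ X, Hfam X ↔ ∃ s ∈ Uset, X = {s})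
    (f : Finset (Finset V) → ℝ)
    (hf : ∀ S : Finset (Finset V), f S = ((S.biUnion id).card : ℝ)) :
    ¬ ∃ g : ℝ → Finset (Finset V) → ℝ,
      (∀ A, Hfam A → ∀ x y : ℝ, x ≤ y → g x A ≤ g y A) ∧
      (∀ X : Finset (Finset V), X ⊆ Uset → X ≠ ∅ →
        IsGreatest {y : ℝ | ∃ A S, Hfam A ∧ S ⊆ Uset ∧ Disjoint S A ∧
          S ∪ A = X ∧ y = g (f S) A} (f X)) := by
  subst hu₁ hv₁ hu₂ hv₂ hU
  rintro ⟨g, hmono, hgr⟩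
  -- distinctness of the four sets
  have d13 : ({a} : Finset V) ≠ {a, b} := by
    intro h
    have : b ∈ ({a} : Finset V) := h ▸ (by simp : b ∈ ({a,b} : Finset V))
    simp [hab.symm] at this
  have d14 : ({a} : Finset V) ≠ {c, d} := by
    intro h
    have : c ∈ ({a} : Finset V) := h ▸ (by simp : c ∈ ({c,d} : Finset V))
    simp [hac.symm] at this
  have d24 : ({c} : Finset V) ≠ {c, d} := by
    intro h
    have : d ∈ ({c} : Finset V) := h ▸ (by simp : d ∈ ({c,d} : Finset V))
    simp [hcd.symm] at this
  -- f values
  have hf1 : f {({a} : Finset V)} = 1 := by rw [hf]; simp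
  have hf2 : f {({c} : Finset V)} = 1 := by rw [hf]; simp
  have hf3 : f {({a, b} : Finset V)} = 2 := by
    rw [hf]; simp [Finset.card_insert_of_notMem, hab]
  have hf4 : f {({c, d} : Finset V)} = 2 := by
    rw [hf]; simp [Finset.card_insert_of_notMem, hcd]
  have hfX1 : f {({a} : Finset V), {a, b}} = 2 := by
    rw [hf]
    have : ({({a} : Finset V), {a, b}} : Finset (Finset V)).biUnion id = {a, b} := by
      ext x; simp
    rw [this]; simp [Finset.card_insert_of_notMem, hab]
  have hfX2 : f {({c} : Finset V), {c, d}} = 2 := by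
    rw [hf]
    have : ({({c} : Finset V), {c, d}} : Finset (Finset V)).biUnion id = {c, d} := by
      ext x; simp
    rw [this]; simp [Finset.card_insert_of_notMem, hcd]
  have hfX3 : f {({a} : Finset V), {c, d}} = 3 := by
    rw [hf]
    have : ({({a} : Finset V), {c, d}} : Finset (Finset V)).biUnion id = {a, c, d} := by
      ext x; simp; tauto
    rw [this, Finset.card_insert_of_notMem (by simp [hac, had]),
      Finset.card_insert_of_notMem (by simp [hcd])]
    simp
  -- Hfam facts
  have hA1 : Hfam {({a} : Finset V)} := (hH _).2 ⟨{a}, by simp, rfl⟩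
  have hA4 : Hfam {({c, d} : Finset V)} := (hH _).2 ⟨{c, d}, by simp, rfl⟩
  -- upper bound 1 : g (f {{a,b}}) {{a}} ≤ 2
  have hub1 : g (f {({a, b} : Finset V)}) {({a} : Finset V)} ≤ 2 := by
    have hmem : g (f {({a, b} : Finset V)}) {({a} : Finset V)} ∈
        {y : ℝ | ∃ A S, Hfam A ∧ S ⊆ ({{a}, {c}, {a, b}, {c, d}} : Finset (Finset V)) ∧
          Disjoint S A ∧ S ∪ A = ({({a} : Finset V), {a, b}} : Finset (Finset V)) ∧
          y = g (f S) A} := by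
      refine ⟨{({a} : Finset V)}, {({a, b} : Finset V)}, hA1, by simp, ?_, ?_, rfl⟩
      · exact Finset.disjoint_singleton.2 (fun h => d13 h.symm)
      · ext x; simp; tauto
    have := (hgr {({a} : Finset V), {a, b}} (by intro x hx; simp at hx; rcases hx with h|h <;> simp [h]) (by simp)).2 hmem
    rwa [hfX1] at this
  -- upper bound 2 : g (f {{c}}) {{c,d}} ≤ 2
  have hub2 : g (f {({c} : Finset V)}) {({c, d} : Finset V)} ≤ 2 := by
    have hmem : g (f {({c} : Finset V)}) {({c, d} : Finset V)} ∈
        {y : ℝ | ∃ A S, Hfam A ∧ S ⊆ ({{a}, {c}, {a, b}, {c, d}} : Finset (Finset V)) ∧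
          Disjoint S A ∧ S ∪ A = ({({c} : Finset V), {c, d}} : Finset (Finset V)) ∧
          y = g (f S) A} := by
      refine ⟨{({c, d} : Finset V)}, {({c} : Finset V)}, hA4, by simp, ?_, ?_, rfl⟩
      · exact Finset.disjoint_singleton.2 d24
      · ext x; simp
    have := (hgr {({c} : Finset V), {c, d}} (by intro x hx; simp at hx; rcases hx with h|h <;> simp [h]) (by simp)).2 hmem
    rwa [hfX2] at this
  -- now the contradiction at X₃ = {{a},{c,d}} with f = 3
  obtain ⟨A, S, hA, hS, hdisj, hunion, hy⟩ :=
    (hgr {({a} : Finset V), {c, d}} (by intro x hx; simp at hx; rcases hx with h|h <;> simp [h]) (by simp)).1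
  rw [hfX3] at hy
  obtain ⟨s, hs, rfl⟩ := (hH _).1 hA
  have hsX : s ∈ ({({a} : Finset V), {c, d}} : Finset (Finset V)) := by
    rw [← hunion]; exact Finset.mem_union_right _ (by simp)
  simp only [Finset.mem_insert, Finset.mem_singleton] at hsX
  have hnotmem : s ∉ S := Finset.disjoint_singleton_right.mp hdisj
  rcases hsX with rfl | rfl
  · -- s = {a}, so S = {{c,d}}
    have hSS : S = {({c, d} : Finset V)} := by
      ext x
      constructor
      · intro hx
        have hxX : x ∈ ({({a} : Finset V), {c, d}} : Finset (Finset V)) := by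
          rw [← hunion]; exact Finset.mem_union_left _ hx
        simp only [Finset.mem_insert, Finset.mem_singleton] at hxX ⊢
        rcases hxX with h | h
        · exact absurd hx (h ▸ hnotmem)
        · exact h
      · intro hx
        simp only [Finset.mem_singleton] at hx
        subst hx
        have : ({c, d} : Finset V) ∈ S ∪ {({a} : Finset V)} := by
          rw [hunion]; simp
        rcases Finset.mem_union.mp this with h | h
        · exact h
        · simp only [Finset.mem_singleton] at h
          exact absurd h.symm d14
    rw [hSS, hf4] at hy
    rw [hf3] at hub1
    linarith
  · -- s = {c,d}, so S = {{a}}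
    have hSS : S = {({a} : Finset V)} := by
      ext x
      constructor
      · intro hx
        have hxX : x ∈ ({({a} : Finset V), {c, d}} : Finset (Finset V)) := by
          rw [← hunion]; exact Finset.mem_union_left _ hx
        simp only [Finset.mem_insert, Finset.mem_singleton] at hxX ⊢
        rcases hxX with h | h
        · exact h
        · exact absurd hx (h ▸ hnotmem)
      · intro hx
        simp only [Finset.mem_singleton] at hx
        subst hx
        have : ({a} : Finset V) ∈ S ∪ {({c, d} : Finset V)} := by
          rw [hunion]; simp
        rcases Finset.mem_union.mp this with h | h
        · exact h
        · simp only [Finset.mem_singleton] at h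
          exact absurd h d14
    rw [hSS, hf1, ← hf2] at hy
    linarith
end

section
/- Let M = (U, I) be a matroid of rank r on a finite set U, let H ⊆ 2^U be a γ-family with γ ≥ 1, let w: B(H) → ℝ be an inductive union maximizing function, and let i ≥ 1 be an integer with γ·i ≤ r. For a natural number j define S_j = { H_1 ⊎ … ⊎ H_j : H_1,…,H_j ∈ H pairwise disjoint and H_1 ∪ … ∪ H_j ∈ I }. Suppose Ŝ ⊆ S_{i−1} is a max (r − γ·(i−1))-representative of S_{i−1} with respect to w, and set R = { H ⊎ S : H ∈ H, S ∈ Ŝ, H ∩ S = ∅, H ∪ S ∈ I }. Then R ⊆ S_i, and every subfamily R̂ ⊆ R that is a max (r − γ·i)-representative of R with respect to w is also a max (r − γ·i)-representative of S_i with respect to w. -/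
lemma card_sup_of_pd {α : Type} [DecidableEq α] (T : Finset (Finset α)) (g : ℕ)
    (hc : ∀ A ∈ T, A.card = g) (hd : (↑T : Set (Finset α)).PairwiseDisjoint id) :
    (T.sup id).card = g * T.card := by
  rw [Finset.sup_eq_biUnion, Finset.card_biUnion]
  · simp only [id]
    rw [Finset.sum_congr rfl hc, Finset.sum_const, smul_eq_mul, mul_comm]
  · intro x hx y hy hxy
    exact hd (Finset.mem_coe.mpr hx) (Finset.mem_coe.mpr hy) hxy


theorem stmt13 {α : Type} [Fintype α] [DecidableEq α]
    (I : Finset α → Prop) (hmat : IsIndepFamily I)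
    (r : ℕ) (hrank : ∀ B : Finset α, I B → (∀ x, x ∉ B → ¬ I (insert x B)) → B.card = r)
    (g : ℕ) (hg : 1 ≤ g)
    (Hfam : Finset α → Prop) (hH : ∀ X, Hfam X → X.card = g)
    (w : Finset α → ℝ) (hw : IsIUM Hfam w)
    (i : ℕ) (hi : 1 ≤ i) (hgi : g * i ≤ r)
    (Sfam : ℕ → Set (Finset α))
    (hSfam : ∀ j, Sfam j = {X | ∃ T : Finset (Finset α), T.card = j ∧
      (∀ A ∈ T, Hfam A) ∧ (↑T : Set (Finset α)).PairwiseDisjoint id ∧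
      X = T.sup id ∧ I X})
    (Shat : Set (Finset α))
    (hShat : MaxQRep I (Sfam (i - 1)) w (r - g * (i - 1)) Shat)
    (R : Set (Finset α))
    (hR : R = {X | ∃ A S, Hfam A ∧ S ∈ Shat ∧ Disjoint A S ∧ X = A ∪ S ∧ I X}) :
    R ⊆ Sfam i ∧
    ∀ Rhat : Set (Finset α), Rhat ⊆ R → MaxQRep I R w (r - g * i) Rhat →
      MaxQRep I (Sfam i) w (r - g * i) Rhat := by
  obtain ⟨gf, hgmono, hgmax⟩ := hw
  have hsub : R ⊆ Sfam i := by
    intro X hX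
    rw [hR] at hX
    obtain ⟨A, S, hA, hS, hAS, hXeq, hIX⟩ := hX
    have hS' := hShat.1 hS
    rw [hSfam (i-1)] at hS'
    obtain ⟨T, hTcard, hTH, hTdisj, hSeq, hIS⟩ := hS'
    have hAdisj : ∀ B ∈ T, Disjoint A B := by
      intro B hB
      have hBS : B ⊆ S := by
        rw [hSeq]
        exact Finset.le_sup (f := id) hB
      exact hAS.mono_right hBS
    have hAnT : A ∉ T := by
      intro hAT
      have hd : Disjoint A A := hAdisj A hAT
      have hAe : A = ∅ := disjoint_self.mp hd
      have := hH A hA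
      rw [hAe] at this
      simp at this
      omega
    rw [hSfam i]
    refine ⟨insert A T, ?_, ?_, ?_, ?_, hIX⟩
    · rw [Finset.card_insert_of_notMem hAnT, hTcard]; omega
    · intro B hB
      rcases Finset.mem_insert.mp hB with h | h
      · exact h ▸ hA
      · exact hTH B h
    · intro x hx y hy hxy
      simp only [Finset.coe_insert, Set.mem_insert_iff, Finset.mem_coe] at hx hy
      simp only [Function.onFun, id]
      rcases hx with rfl | hx
      · rcases hy with rfl | hy
        · exact absurd rfl hxy
        · exact hAdisj y hy
      · rcases hy with rfl | hy
        · exact (hAdisj x hx).symm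
        · exact hTdisj (Finset.mem_coe.mpr hx) (Finset.mem_coe.mpr hy) hxy
    · rw [Finset.sup_insert, hXeq, hSeq]
      simp [Finset.sup_eq_union]
  refine ⟨hsub, ?_⟩
  intro Rhat hRhatsub hRhat
  refine ⟨fun X hX => hsub (hRhatsub hX), ?_⟩
  intro Y hY X hXS hXY hIXY
  rw [hSfam i] at hXS
  obtain ⟨T, hTcard, hTH, hTdisj, hXeq, hIX⟩ := hXS
  have hXdu : IsDisjUnionOf Hfam X := ⟨T, hTH, hTdisj, hXeq⟩
  have hcardX : X.card = g * i := by
    rw [hXeq, card_sup_of_pd T g (fun A hA => hH A (hTH A hA)) hTdisj, hTcard]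
  have hXne : X ≠ ∅ := by
    intro h
    rw [h] at hcardX
    simp at hcardX
    rcases hcardX with h | h <;> omega
  obtain ⟨hmem, hub⟩ := hgmax X hXdu hXne
  obtain ⟨A, S, hA, hSdu, hdSA, hSAX, hweq⟩ := hmem
  have hcardA : A.card = g := hH A hA
  have hSX : S ⊆ X := hSAX ▸ Finset.subset_union_left
  have hIS : I S := hmat.2.1 S X hSX hIX
  -- S ∈ Sfam (i-1)
  obtain ⟨T', hT'H, hT'disj, hSeq⟩ := hSdu
  have hcS : S.card = g * T'.card := by
    rw [hSeq, card_sup_of_pd T' g (fun B hB => hH B (hT'H B hB)) hT'disj]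
  have hsum : X.card = S.card + A.card := by
    rw [← hSAX, Finset.card_union_of_disjoint hdSA]
  have hT'card : T'.card = i - 1 := by
    have h1 : g * T'.card + g = g * i := by
      rw [← hcS, ← hcardX]
      omega
    have h2 : g * (T'.card + 1) = g * i := by rw [Nat.mul_add, Nat.mul_one]; exact h1
    have := Nat.eq_of_mul_eq_mul_left (by omega : 0 < g) h2
    omega
  have hSmem : S ∈ Sfam (i - 1) := by
    rw [hSfam]
    exact ⟨T', hT'card, hT'H, hT'disj, hSeq, hIS⟩
  have hcardAY : (A ∪ Y).card ≤ r - g * (i - 1) := by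
    have h1 : (A ∪ Y).card ≤ A.card + Y.card := Finset.card_union_le A Y
    have h2 : g * (i - 1) + g = g * i := by
      have : g * (i - 1) + g * 1 = g * ((i - 1) + 1) := (Nat.mul_add g _ _).symm
      rw [Nat.mul_one] at this
      rw [this]
      congr 1
      omega
    omega
  have hdisjS : Disjoint S (A ∪ Y) := by
    rw [Finset.disjoint_union_right]
    exact ⟨hdSA, hXY.mono_left hSX⟩
  have hIun : I (S ∪ (A ∪ Y)) := by
    rw [← Finset.union_assoc, hSAX]
    exact hIXY
  obtain ⟨Sh, hShmem, hShdisj, hIShAY, hwS⟩ :=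
    hShat.2 (A ∪ Y) hcardAY S hSmem hdisjS hIun
  rw [Finset.disjoint_union_right] at hShdisj
  obtain ⟨hShA, hShY⟩ := hShdisj
  have hIX' : I (A ∪ Sh) := by
    refine hmat.2.1 _ _ ?_ hIShAY
    intro x hx
    simp only [Finset.mem_union] at hx ⊢
    tauto
  have hX'R : A ∪ Sh ∈ R := by
    rw [hR]
    exact ⟨A, Sh, hA, hShmem, hShA.symm, rfl, hIX'⟩
  have hX'Sfam := hsub hX'R
  rw [hSfam i] at hX'Sfam
  obtain ⟨T'', hT''card, hT''H, hT''disj, hX'eq, _⟩ := hX'Sfam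
  have hX'du : IsDisjUnionOf Hfam (A ∪ Sh) := ⟨T'', hT''H, hT''disj, hX'eq⟩
  have hX'ne : (A ∪ Sh) ≠ ∅ := by
    intro h
    have : A ⊆ (∅ : Finset α) := h ▸ Finset.subset_union_left
    have hAe : A = ∅ := Finset.subset_empty.mp this
    have := hH A hA
    rw [hAe] at this
    simp at this
    omega
  have hub' := (hgmax (A ∪ Sh) hX'du hX'ne).2
  have hShdu : IsDisjUnionOf Hfam Sh := by
    have := hShat.1 hShmem
    rw [hSfam] at this
    obtain ⟨T3, _, h1, h2, h3, _⟩ := this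
    exact ⟨T3, h1, h2, h3⟩
  have hge : gf (w Sh) A ≤ w (A ∪ Sh) :=
    hub' ⟨A, Sh, hA, hShdu, hShA, Finset.union_comm Sh A, rfl⟩
  have hdX'Y : Disjoint (A ∪ Sh) Y := by
    rw [Finset.disjoint_union_left]
    exact ⟨hXY.mono_left (hSAX ▸ Finset.subset_union_right), hShY⟩
  have hIX'Y : I ((A ∪ Sh) ∪ Y) := by
    have heq : (A ∪ Sh) ∪ Y = Sh ∪ (A ∪ Y) := by
      ext x
      simp only [Finset.mem_union]
      tauto
    rw [heq]
    exact hIShAY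
  obtain ⟨Xh, hXh, h1, h2, h3⟩ := hRhat.2 Y hY (A ∪ Sh) hX'R hdX'Y hIX'Y
  refine ⟨Xh, hXh, h1, h2, ?_⟩
  calc w X = gf (w S) A := hweq
    _ ≤ gf (w Sh) A := hgmono A hA _ _ hwS
    _ ≤ w (A ∪ Sh) := hge
    _ ≤ w Xh := h3
end

section
/- Let G = (V, E) be a finite simple graph and k ≥ 1 an integer. For each u ∈ V let D_u be a two-element set such that the sets D_u are pairwise disjoint and disjoint from V; let S = ⋃_{u∈V} D_u and U = V ⊎ S. Define costs c(u) = 1 if u ∈ V and c(u) = 0 otherwise, and profits p(u,v) = 1 if u ∈ V and v ∈ D_u, and p(u,v) = 0 otherwise. Let I_C = { J ⊆ S : |J| ≤ 2k−1 } ∪ { J ⊆ S : |J| = 2k and J is not the union of k of the sets D_u } ∪ { J ⊆ S : J = ⊎_{u∈A} D_u for some A ⊆ V with |A| = k such that A is a clique in G }. Suppose (A, C) is a pair of disjoint subsets of U with C ∈ I_C and UFLP-MC profit at least k, and (A, C) is inclusion-minimal among such pairs, i.e., there is no pair (A', C') ≠ (A, C) with A' ⊆ A, C' ⊆ C, A'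 and C' disjoint, C' ∈ I_C, and UFLP-MC profit of (A', C') at least k. Then A ⊆ V, |A| = k, C = ⊎_{u∈A} D_u (so |C| = 2k), and A is a clique in G. -/
theorem stmt15 {α : Type} [Fintype α] [DecidableEq α]
    (G : SimpleGraph α) (k : ℕ) (hk : 1 ≤ k)
    (V S : Finset α) (D : α → Finset α)
    (hD2 : ∀ u ∈ V, (D u).card = 2)
    (hDdisj : ∀ u ∈ V, ∀ v ∈ V, u ≠ v → Disjoint (D u) (D v))
    (hDV : ∀ u ∈ V, Disjoint (D u) V)
    (hS : S = V.biUnion D)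
    (hU : (Finset.univ : Finset α) = V ∪ S)
    (c : α → ℕ) (hc : ∀ u, c u = if u ∈ V then 1 else 0)
    (p : α → α → ℕ)
    (hp : ∀ u v, p u v = if u ∈ V ∧ v ∈ D u then 1 else 0)
    (IC : Finset α → Prop)
    (hIC : ∀ J : Finset α, IC J ↔
      (J ⊆ S ∧ J.card ≤ 2 * k - 1) ∨
      (J ⊆ S ∧ J.card = 2 * k ∧
        ¬ ∃ A : Finset α, A ⊆ V ∧ A.card = k ∧ J = A.biUnion D) ∨
      (∃ A : Finset α, A ⊆ V ∧ A.card = k ∧ J = A.biUnion D ∧ G.IsClique ↑A))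
    (A C : Finset α)
    (hdisj : Disjoint A C) (hCind : IC C)
    (hprofit : (k : ℤ) ≤ mcProfit p c A C)
    (hminimal : ¬ ∃ A' C' : Finset α, (A' ≠ A ∨ C' ≠ C) ∧ A' ⊆ A ∧ C' ⊆ C ∧
      Disjoint A' C' ∧ IC C' ∧ (k : ℤ) ≤ mcProfit p c A' C') :
    A ⊆ V ∧ A.card = k ∧ C = A.biUnion D ∧ C.card = 2 * k ∧ G.IsClique ↑A := by
  classical
  set A0 := A ∩ V with hA0
  have hsub : A0 ⊆ A := Finset.inter_subset_left
  have hA0V : A0 ⊆ V := Finset.inter_subset_right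
  -- profit formula
  have hprof : ∀ B : Finset α,
      mcProfit p c B C = ((C ∩ (B ∩ V).biUnion D).card : ℤ) - ((B ∩ V).card : ℤ) := by
    intro B
    unfold mcProfit
    have h1 : ∀ v, (B.sup fun u => p u v) = if v ∈ (B ∩ V).biUnion D then 1 else 0 := by
      intro v
      by_cases hv : v ∈ (B ∩ V).biUnion D
      · obtain ⟨u, hu, hvu⟩ := Finset.mem_biUnion.mp hv
        have hu' := Finset.mem_inter.mp hu
        rw [if_pos hv]
        refine le_antisymm (Finset.sup_le fun w _ => ?_) ?_
        · rw [hp]; split <;> omega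
        · calc 1 = p u v := by rw [hp, if_pos ⟨hu'.2, hvu⟩]
            _ ≤ B.sup (fun u => p u v) := Finset.le_sup (f := fun u => p u v) hu'.1
      · rw [if_neg hv]
        refine Nat.le_zero.mp (Finset.sup_le fun w hw => ?_)
        by_cases h : w ∈ V ∧ v ∈ D w
        · exact absurd (Finset.mem_biUnion.mpr
            ⟨w, Finset.mem_inter.mpr ⟨hw, h.1⟩, h.2⟩) hv
        · rw [hp, if_neg h]
    have h2 : (∑ v ∈ C, ((B.sup fun u => p u v : ℕ) : ℤ))
        = ((C ∩ (B ∩ V).biUnion D).card : ℤ) := by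
      have : ∀ v ∈ C, ((B.sup fun u => p u v : ℕ) : ℤ)
          = if v ∈ (B ∩ V).biUnion D then (1 : ℤ) else 0 := by
        intro v _; rw [h1 v]; split <;> simp
      rw [Finset.sum_congr rfl this, Finset.sum_ite_mem, Finset.sum_const]
      simp
    have h3 : (∑ u ∈ B, (c u : ℤ)) = ((B ∩ V).card : ℤ) := by
      have : ∀ u ∈ B, (c u : ℤ) = if u ∈ V then (1 : ℤ) else 0 := by
        intro u _; rw [hc]; split <;> simp
      rw [Finset.sum_congr rfl this, Finset.sum_ite_mem, Finset.sum_const]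
      simp
    rw [h2, h3]
  have hXcard : ∀ B : Finset α, B ⊆ V → (B.biUnion D).card = 2 * B.card := by
    intro B hBV
    rw [Finset.card_biUnion (fun u hu v hv huv => hDdisj u (hBV hu) v (hBV hv) huv),
      Finset.sum_congr rfl (fun u hu => hD2 u (hBV hu)), Finset.sum_const,
      smul_eq_mul]
    omega
  set X := A0.biUnion D with hX
  have hXc : X.card = 2 * A0.card := hXcard A0 hA0V
  have hCS : C ⊆ S ∧ C.card ≤ 2 * k := by
    rcases (hIC C).mp hCind with ⟨h1, h2⟩ | ⟨h1, h2, _⟩ | ⟨A', hA'V, hA'c, hCeq, _⟩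
    · exact ⟨h1, by omega⟩
    · exact ⟨h1, h2.le⟩
    · refine ⟨?_, ?_⟩
      · rw [hCeq, hS]
        exact Finset.biUnion_subset_biUnion_of_subset_left D hA'V
      · rw [hCeq, hXcard A' hA'V, hA'c]
  -- counting
  have hm1 : (C ∩ X).card ≤ 2 * A0.card :=
    hXc ▸ Finset.card_le_card Finset.inter_subset_right
  have hm2 : (C ∩ X).card ≤ C.card := Finset.card_le_card Finset.inter_subset_left
  have hkey : (k : ℤ) ≤ ((C ∩ X).card : ℤ) - (A0.card : ℤ) := by
    have := hprof A
    rw [← hA0] at this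
    rw [this] at hprofit
    exact hprofit
  have hkey' : k + A0.card ≤ (C ∩ X).card := by exact_mod_cast by omega
  have hnk : A0.card = k := by omega
  have hmk : (C ∩ X).card = 2 * k := by omega
  have hCcard : C.card = 2 * k := by omega
  have hCX : C = X := by
    have e1 : C ∩ X = C := Finset.eq_of_subset_of_card_le Finset.inter_subset_left
      (by omega)
    have e2 : C ∩ X = X := Finset.eq_of_subset_of_card_le Finset.inter_subset_right
      (by omega)
    rw [← e1, e2]
  -- minimality: A = A0
  have hA0A : A0 = A := by
    by_contra hne
    refine hminimal ⟨A0, C, Or.inl hne, hsub, subset_rfl,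
      hdisj.mono_left hsub, hCind, ?_⟩
    rw [hprof A0, Finset.inter_eq_left.mpr hA0V, ← hX]
    omega
  have hAV : A ⊆ V := hA0A ▸ hA0V
  have hAk : A.card = k := hA0A ▸ hnk
  have hCA : C = A.biUnion D := by rw [hCX, hX, hA0A]
  refine ⟨hAV, hAk, hCA, hCcard, ?_⟩
  rcases (hIC C).mp hCind with ⟨_, h2⟩ | ⟨_, _, hno⟩ | ⟨A'', hA''V, hA''c, hCeq, hclique⟩
  · omega
  · exact absurd ⟨A, hAV, hAk, hCA⟩ hno
  · have hAA'' : A = A'' := by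
      refine Finset.eq_of_subset_of_card_le (fun u hu => ?_) (by omega)
      have hDu : (D u).Nonempty := Finset.card_pos.mp (by rw [hD2 u (hAV hu)]; omega)
      obtain ⟨x, hx⟩ := hDu
      have hxC : x ∈ C := hCA ▸ Finset.mem_biUnion.mpr ⟨u, hu, hx⟩
      rw [hCeq] at hxC
      obtain ⟨u'', hu'', hxu''⟩ := Finset.mem_biUnion.mp hxC
      by_cases h : u = u''
      · exact h ▸ hu''
      · exact absurd hx (Finset.disjoint_right.mp
          (hDdisj u (hAV hu) u'' (hA''V hu'') h) hxu'')
    exact hAA'' ▸ hclique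
end
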